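/- arXiv:1605.08462 — 9 statements merged into one kernel-verified Lean document; each statement's English description precedes it below -/
import Mathlib

section
/- (Beurling's criterion) Let 1 < p < ∞ and ρ ∈ Adm(Γ). Suppose there is a subfamily Γ̃ ⊆ Γ with ℓ_ρ(γ) = 1 for all γ ∈ Γ̃, such that whenever h : E → ℝ satisfies ∑_e N(γ,e)h(e) ≥ 0 for all γ ∈ Γ̃, it holds that ∑_e h(e)ρ(e)^{p-1}σ(e) ≥ 0. Then ρ is extremal, i.e., E_{p,σ}(ρ) ≤ E_{p,σ}(ρ̃) for every ρ̃ ∈ Adm(Γ). -/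
/-!
Write `w = ρ ^ (p - 1) σ`. Then `E(ρ) = ∑ ρ w`, and Beurling's condition applied to
`h = ρ' - ρ` (whose `Γ̃`-lengths are `ℓ_{ρ'}(γ) - 1 ≥ 0`) gives `∑ ρ w ≤ ∑ ρ' w`. Young's
inequality `ρ' ρ ^ (p - 1) ≤ ρ' ^ p / p + ρ ^ p / q`, with `q = p / (p - 1)`, bounds the latter by
`E(ρ') / p + E(ρ) / q`, and `1 / p + 1 / q = 1` turns `E(ρ) ≤ E(ρ') / p + E(ρ) / q`
into `E(ρ) ≤ E(ρ')`.
-/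

/-- The `p`-energy of a density `ρ` with edge weights `σ`. -/
noncomputable def energy {E : Type*} [Fintype E] (σ : E → ℝ) (p : ℝ) (ρ : E → ℝ) : ℝ :=
  ∑ e, σ e * |ρ e| ^ p

/-- Admissible densities for a family `Γ` of usage vectors. -/
def Adm {E : Type*} [Fintype E] (Γ : Set (E → ℝ)) : Set (E → ℝ) :=
  {ρ | (∀ e, 0 ≤ ρ e) ∧ ∀ γ ∈ Γ, 1 ≤ ∑ e, γ e * ρ e}

open Finset

section

variable {E : Type*} [Fintype E]

lemma energy_eq_sum_mul_rpow_sub_one_mul {σ ρ : E → ℝ} {p : ℝ} (hp : p ≠ 0)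
    (hρ : ∀ e, 0 ≤ ρ e) : energy σ p ρ = ∑ e, ρ e * (ρ e ^ (p - 1) * σ e) := by
  refine sum_congr rfl fun e _ => ?_
  have hp' : 1 + (p - 1) ≠ 0 := by simpa using hp
  rw [abs_of_nonneg (hρ e), ← mul_assoc, ← Real.rpow_one_add' (hρ e) hp', add_sub_cancel,
    mul_comm]

lemma sum_mul_rpow_sub_one_mul_le {σ ρ ρ' : E → ℝ} {p q : ℝ} (hpq : p.HolderConjugate q)
    (hσ : ∀ e, 0 ≤ σ e) (hρ : ∀ e, 0 ≤ ρ e) (hρ' : ∀ e, 0 ≤ ρ' e) :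
    ∑ e, ρ' e * (ρ e ^ (p - 1) * σ e) ≤ energy σ p ρ' / p + energy σ p ρ / q := by
  simp only [energy, sum_div, ← sum_add_distrib]
  refine sum_le_sum fun e _ => ?_
  have young :=
    Real.young_inequality_of_nonneg (hρ' e) (Real.rpow_nonneg (hρ e) (p - 1)) hpq
  rw [← Real.rpow_mul (hρ e), hpq.sub_one_mul_conj] at young
  rw [abs_of_nonneg (hρ e), abs_of_nonneg (hρ' e)]
  calc ρ' e * (ρ e ^ (p - 1) * σ e) = ρ' e * ρ e ^ (p - 1) * σ e := by ring
    _ ≤ (ρ' e ^ p / p + ρ e ^ p / q) * σ e := mul_le_mul_of_nonneg_right young (hσ e)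
    _ = σ e * ρ' e ^ p / p + σ e * ρ e ^ p / q := by ring

lemma sum_mul_le_sum_mul_of_forall_nonneg_imp {Γ : Set (E → ℝ)} {ρ ρ' w : E → ℝ}
    (hlen : ∀ γ ∈ Γ, ∑ e, γ e * ρ e ≤ ∑ e, γ e * ρ' e)
    (hw : ∀ h : E → ℝ, (∀ γ ∈ Γ, 0 ≤ ∑ e, γ e * h e) → 0 ≤ ∑ e, h e * w e) :
    ∑ e, ρ e * w e ≤ ∑ e, ρ' e * w e := by
  have hdiff := hw (ρ' - ρ) fun γ hγ => by
    simpa only [Pi.sub_apply, mul_sub, sum_sub_distrib, sub_nonneg] using hlen γ hγ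
  simpa only [Pi.sub_apply, sub_mul, sum_sub_distrib, sub_nonneg] using hdiff

end

lemma Real.HolderConjugate.le_of_le_div_add_div {a b p q : ℝ} (hpq : p.HolderConjugate q)
    (h : a ≤ b / p + a / q) : a ≤ b := by
  have hsplit : a = a * p⁻¹ + a * q⁻¹ := by rw [← mul_add, hpq.inv_add_inv_eq_one, mul_one]
  rw [div_eq_mul_inv, div_eq_mul_inv] at h
  exact le_of_mul_le_mul_right (by linarith) (inv_pos.mpr hpq.pos)

theorem stmt3_general {E : Type*} [Fintype E] (σ : E → ℝ) (hσ : ∀ e, 0 < σ e)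
    (p : ℝ) (hp : 1 < p)
    (Γ : Set (E → ℝ))
    (ρ : E → ℝ) (hρ : ρ ∈ Adm Γ)
    (Γt : Set (E → ℝ)) (hsub : Γt ⊆ Γ)
    (hlen : ∀ γ ∈ Γt, ∑ e, γ e * ρ e = 1)
    (hbeurling : ∀ h : E → ℝ, (∀ γ ∈ Γt, 0 ≤ ∑ e, γ e * h e) →
      0 ≤ ∑ e, h e * ρ e ^ (p - 1) * σ e) :
    ∀ ρ' ∈ Adm Γ, energy σ p ρ ≤ energy σ p ρ' := by
  rintro ρ' ⟨hρ'_nonneg, hρ'_adm⟩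
  have hpq := Real.HolderConjugate.conjExponent hp
  simp_rw [mul_assoc] at hbeurling
  refine hpq.le_of_le_div_add_div ?_
  calc energy σ p ρ = ∑ e, ρ e * (ρ e ^ (p - 1) * σ e) :=
        energy_eq_sum_mul_rpow_sub_one_mul (by positivity) hρ.1
    _ ≤ ∑ e, ρ' e * (ρ e ^ (p - 1) * σ e) :=
        sum_mul_le_sum_mul_of_forall_nonneg_imp
          (fun γ hγ => (hlen γ hγ).trans_le (hρ'_adm γ (hsub hγ))) hbeurling
    _ ≤ energy σ p ρ' / p + energy σ p ρ / (p / (p - 1)) :=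
        sum_mul_rpow_sub_one_mul_le hpq (fun e => (hσ e).le) hρ.1 hρ'_nonneg

/-- Beurling's criterion: if `ρ ∈ Adm(Γ)` and there is `Γ̃ ⊆ Γ` with
`ℓ_ρ(γ) = 1` on `Γ̃` such that `N(Γ̃)h ≥ 0` implies `∑ h ρ^{p-1} σ ≥ 0`, then `ρ` is
extremal. -/
theorem stmt3 {E : Type*} [Fintype E] (σ : E → ℝ) (hσ : ∀ e, 0 < σ e)
    (p : ℝ) (hp : 1 < p)
    (Γ : Set (E → ℝ)) (hΓ : ∀ γ ∈ Γ, (∀ e, 0 ≤ γ e) ∧ γ ≠ 0)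
    (ρ : E → ℝ) (hρ : ρ ∈ Adm Γ)
    (Γt : Set (E → ℝ)) (hsub : Γt ⊆ Γ)
    (hlen : ∀ γ ∈ Γt, ∑ e, γ e * ρ e = 1)
    (hbeurling : ∀ h : E → ℝ, (∀ γ ∈ Γt, 0 ≤ ∑ e, γ e * h e) →
      0 ≤ ∑ e, h e * ρ e ^ (p - 1) * σ e) :
    ∀ ρ' ∈ Adm Γ, energy σ p ρ ≤ energy σ p ρ' :=
  stmt3_general σ hσ p hp Γ ρ hρ Γt hsub hlen hbeurling
end

section
/- Under the hypotheses of Beurling's criterion with subfamily Γ̃, one moreover has Mod_{p,σ}(Γ̃) = Mod_{p,σ}(Γ). -/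
open scoped ENNReal

/-- The `p`-modulus of a family `Γ`. -/
noncomputable def pMod {E : Type*} [Fintype E] (σ : E → ℝ) (p : ℝ) (Γ : Set (E → ℝ)) : ℝ≥0∞ :=
  ⨅ ρ ∈ Adm Γ, ENNReal.ofReal (energy σ p ρ)

/-
If `ρ` is admissible for `Γ`, has length exactly one on `Γ̃ ⊆ Γ`, and satisfies Beurling's
criterion, then for any `η` admissible for `Γ̃` the criterion applied to `h = η - ρ` gives
`∑ σ ρ^p ≤ ∑ σ η ρ^(p-1)`, and Young's inequality bounds the right side by
`E(η)/p + E(ρ)/q` with `1/p + 1/q = 1`. Hence `E(ρ) ≤ E(η)`, so `ρ` is extremal for `Γ̃`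
as well, and `Mod(Γ) ≤ E(ρ) ≤ Mod(Γ̃) ≤ Mod(Γ)`.
-/

lemma mul_rpow_sub_one_le {p q a b : ℝ} (hpq : p.HolderConjugate q) (ha : 0 ≤ a) (hb : 0 ≤ b) :
    a * b ^ (p - 1) ≤ a ^ p / p + b ^ p / q := by
  have h := Real.young_inequality_of_nonneg ha (Real.rpow_nonneg hb (p - 1)) hpq
  rwa [← Real.rpow_mul hb, hpq.sub_one_mul_conj] at h

section Energy

variable {E : Type*} [Fintype E] (σ : E → ℝ) (p : ℝ)

lemma energy_of_nonneg {ρ : E → ℝ} (hρ : ∀ e, 0 ≤ ρ e) :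
    energy σ p ρ = ∑ e, σ e * ρ e ^ p := by
  simp only [energy, abs_of_nonneg (hρ _)]

lemma Adm_anti {Γ Γ' : Set (E → ℝ)} (h : Γ' ⊆ Γ) : Adm Γ ⊆ Adm Γ' :=
  fun _ hρ => ⟨hρ.1, fun γ hγ => hρ.2 γ (h hγ)⟩

lemma pMod_mono {Γ Γ' : Set (E → ℝ)} (h : Γ' ⊆ Γ) : pMod σ p Γ' ≤ pMod σ p Γ :=
  biInf_mono (Adm_anti h)

lemma pMod_le_ofReal_energy {Γ : Set (E → ℝ)} {ρ : E → ℝ} (hρ : ρ ∈ Adm Γ) :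
    pMod σ p Γ ≤ ENNReal.ofReal (energy σ p ρ) :=
  iInf₂_le ρ hρ

lemma sum_mul_rpow_sub_one_le_energy {q : ℝ} (hpq : p.HolderConjugate q) (hσ : ∀ e, 0 ≤ σ e)
    {η ρ : E → ℝ} (hη : ∀ e, 0 ≤ η e) (hρ : ∀ e, 0 ≤ ρ e) :
    ∑ e, η e * ρ e ^ (p - 1) * σ e ≤ energy σ p η / p + energy σ p ρ / q := by
  rw [energy_of_nonneg σ p hη, energy_of_nonneg σ p hρ, Finset.sum_div, Finset.sum_div,
    ← Finset.sum_add_distrib]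
  refine Finset.sum_le_sum fun e _ => ?_
  calc η e * ρ e ^ (p - 1) * σ e = σ e * (η e * ρ e ^ (p - 1)) := by ring
    _ ≤ σ e * (η e ^ p / p + ρ e ^ p / q) :=
        mul_le_mul_of_nonneg_left (mul_rpow_sub_one_le hpq (hη e) (hρ e)) (hσ e)
    _ = σ e * η e ^ p / p + σ e * ρ e ^ p / q := by ring

/-- `hvar` says that the first variation of the energy at `ρ` towards `η` is nonnegative. -/
lemma energy_le_sum_mul_rpow_sub_one (hp : 0 < p) {ρ η : E → ℝ} (hρ : ∀ e, 0 ≤ ρ e)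
    (hvar : 0 ≤ ∑ e, (η e - ρ e) * ρ e ^ (p - 1) * σ e) :
    energy σ p ρ ≤ ∑ e, η e * ρ e ^ (p - 1) * σ e := by
  have hpow : ∀ e, ρ e * ρ e ^ (p - 1) = ρ e ^ p := fun e => by
    rw [← Real.rpow_one_add' (hρ e) (by linarith), add_sub_cancel]
  have hsplit : ∑ e, (η e - ρ e) * ρ e ^ (p - 1) * σ e
      = ∑ e, η e * ρ e ^ (p - 1) * σ e - ∑ e, σ e * ρ e ^ p := by
    rw [← Finset.sum_sub_distrib]
    refine Finset.sum_congr rfl fun e _ => ?_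
    rw [← hpow e]
    ring
  rw [energy_of_nonneg σ p hρ]
  linarith

lemma energy_le_of_beurling (hσ : ∀ e, 0 ≤ σ e) (hp : 1 < p) {Γ : Set (E → ℝ)} {ρ η : E → ℝ}
    (hρ : ∀ e, 0 ≤ ρ e) (hlen : ∀ γ ∈ Γ, ∑ e, γ e * ρ e = 1)
    (hbeurling : ∀ h : E → ℝ, (∀ γ ∈ Γ, 0 ≤ ∑ e, γ e * h e) →
      0 ≤ ∑ e, h e * ρ e ^ (p - 1) * σ e)
    (hη : η ∈ Adm Γ) :
    energy σ p ρ ≤ energy σ p η := by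
  have hpq : p.HolderConjugate (Real.conjExponent p) := .conjExponent hp
  have hvar : 0 ≤ ∑ e, (η e - ρ e) * ρ e ^ (p - 1) * σ e := by
    refine hbeurling _ fun γ hγ => ?_
    simp only [mul_sub, Finset.sum_sub_distrib, hlen γ hγ, sub_nonneg]
    exact hη.2 γ hγ
  have h := (energy_le_sum_mul_rpow_sub_one σ p (by linarith) hρ hvar).trans
    (sum_mul_rpow_sub_one_le_energy σ p hpq hσ hη.1 hρ)
  rw [div_eq_mul_inv, div_eq_mul_inv, ← hpq.one_sub_inv] at h
  have hscaled : energy σ p ρ * p⁻¹ ≤ energy σ p η * p⁻¹ := by linarith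
  exact le_of_mul_le_mul_right hscaled (inv_pos.2 (by linarith))

end Energy

theorem stmt4_general {E : Type*} [Fintype E] (σ : E → ℝ) (hσ : ∀ e, 0 < σ e)
    (p : ℝ) (hp : 1 < p)
    (Γ : Set (E → ℝ))
    (ρ : E → ℝ) (hρ : ρ ∈ Adm Γ)
    (Γt : Set (E → ℝ)) (hsub : Γt ⊆ Γ)
    (hlen : ∀ γ ∈ Γt, ∑ e, γ e * ρ e = 1)
    (hbeurling : ∀ h : E → ℝ, (∀ γ ∈ Γt, 0 ≤ ∑ e, γ e * h e) →
      0 ≤ ∑ e, h e * ρ e ^ (p - 1) * σ e) :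
    pMod σ p Γt = pMod σ p Γ := by
  refine le_antisymm (pMod_mono σ p hsub) (le_iInf₂ fun η hη => ?_)
  calc pMod σ p Γ ≤ ENNReal.ofReal (energy σ p ρ) := pMod_le_ofReal_energy σ p hρ
    _ ≤ ENNReal.ofReal (energy σ p η) := ENNReal.ofReal_le_ofReal <|
        energy_le_of_beurling σ p (fun e => (hσ e).le) hp hρ.1 hlen hbeurling hη

/-- under the hypotheses of Beurling's criterion with subfamily `Γ̃`,
one has `Mod_{p,σ}(Γ̃) = Mod_{p,σ}(Γ)`. -/
theorem stmt4 {E : Type*} [Fintype E] (σ : E → ℝ) (hσ : ∀ e, 0 < σ e)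
    (p : ℝ) (hp : 1 < p)
    (Γ : Set (E → ℝ)) (hΓ : ∀ γ ∈ Γ, (∀ e, 0 ≤ γ e) ∧ γ ≠ 0)
    (ρ : E → ℝ) (hρ : ρ ∈ Adm Γ)
    (Γt : Set (E → ℝ)) (hsub : Γt ⊆ Γ)
    (hlen : ∀ γ ∈ Γt, ∑ e, γ e * ρ e = 1)
    (hbeurling : ∀ h : E → ℝ, (∀ γ ∈ Γt, 0 ≤ ∑ e, γ e * h e) →
      0 ≤ ∑ e, h e * ρ e ^ (p - 1) * σ e) :
    pMod σ p Γt = pMod σ p Γ :=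
  stmt4_general σ hσ p hp Γ ρ hρ Γt hsub hlen hbeurling
end

section
/- (Strong duality for p-modulus) For a finite family Γ of nonzero nonnegative usage vectors and 1 < p < ∞, Mod_{p,σ}(Γ) = sup over λ ∈ ℝ^Γ_{≥0} of g(λ), where g(λ) = ∑_γ λ(γ) − (p−1) ∑_e σ(e) ( (1/(p σ(e))) ∑_γ λ(γ)N(γ,e) )^{p/(p−1)}. -/
/-!
Weak duality: for `λ ≥ 0` the Lagrangian
`L(ρ, λ) = ∑ σ ρ^p + ∑ λ_γ (1 - (Nρ)_γ)` is at most the energy of every admissible `ρ`,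
and its minimum over `ρ ≥ 0` is `g(λ)`: the minimization decouples over the edges, and on each
edge `min_{r ≥ 0} (s r^p - c r) = -(p - 1) s (c / (p s))^{p/(p-1)}` by Young's inequality.
Strong duality is Slater's theorem: the strict epigraph of the perturbed problem is an open convex
set missing `(0, Mod)`; a separating functional, normalised by its (negative, thanks to the
strictly admissible constant density) last coordinate, is a multiplier `λ ≥ 0` with
`Mod ≤ L(ρ, λ)` for all `ρ ≥ 0`, hence `Mod ≤ g(λ)`.
-/

/-- The dual objective function `g(λ)` for the `p`-modulus problem. -/
noncomputable def dualObj {E ι : Type*} [Fintype E] [Fintype ι]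
    (σ : E → ℝ) (p : ℝ) (N : ι → E → ℝ) (lam : ι → ℝ) : ℝ :=
  ∑ i, lam i -
    (p - 1) * ∑ e, σ e * ((1 / (p * σ e)) * ∑ i, lam i * N i e) ^ (p / (p - 1))

open Set Filter Topology

lemma isLeast_sum_image_univ_pi {E β : Type*} {α : E → Type*} [Fintype E] [AddCommMonoid β]
    [PartialOrder β] [IsOrderedAddMonoid β] {f : ∀ e, α e → β} {s : ∀ e, Set (α e)} {m : E → β}
    (h : ∀ e, IsLeast (f e '' s e) (m e)) :
    IsLeast ((fun x => ∑ e, f e (x e)) '' univ.pi s) (∑ e, m e) := by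
  choose x hx hfx using fun e => (h e).1
  refine ⟨⟨x, fun e _ => hx e, Finset.sum_congr rfl fun e _ => hfx e⟩, ?_⟩
  rintro _ ⟨y, hy, rfl⟩
  exact Finset.sum_le_sum fun e _ => (h e).2 ⟨y e, hy e (mem_univ e), rfl⟩

lemma ConvexOn.sum {X ι : Type*} [AddCommGroup X] [Module ℝ X] {s : Set X} {t : Finset ι}
    {f : ι → X → ℝ} (hs : Convex ℝ s) (h : ∀ i ∈ t, ConvexOn ℝ s (f i)) :
    ConvexOn ℝ s fun x => ∑ i ∈ t, f i x := by
  simpa only [← Finset.sum_apply] using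
    Finset.sum_induction f (ConvexOn ℝ s) (fun _ _ => ConvexOn.add) (convexOn_const 0 hs) h

lemma nonpos_of_forall_nonneg_add_mul_lt {a b c : ℝ} (h : ∀ t : ℝ, 0 ≤ t → a + t * b < c) :
    b ≤ 0 := by
  by_contra! hb
  have := h (|c - a| / b) (by positivity)
  rw [div_mul_cancel₀ _ hb.ne'] at this
  linarith [le_abs_self (c - a)]

lemma le_of_forall_pos_add_mul_lt {a b c : ℝ} (h : ∀ ε : ℝ, 0 < ε → a + ε * b < c) : a ≤ c := by
  have hlim : Tendsto (fun ε : ℝ => a + ε * b) (𝓝[>] 0) (𝓝 a) := by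
    simpa using (tendsto_const_nhds.add (tendsto_id.mul_const b)).mono_left
      (nhdsWithin_le_nhds (a := (0 : ℝ)) (s := Ioi 0))
  exact le_of_tendsto hlim (eventually_nhdsWithin_of_forall fun ε hε => (h ε hε).le)

lemma StrongDual.exists_pi_prod_apply_eq {ι : Type*} [Fintype ι]
    (ℓ : StrongDual ℝ ((ι → ℝ) × ℝ)) :
    ∃ (μ : ι → ℝ) (β : ℝ), ∀ z w, ℓ (z, w) = ∑ i, z i * μ i + w * β := by
  classical
  refine ⟨fun i => ℓ (Pi.single i 1, 0), ℓ (0, 1), fun z w => ?_⟩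
  have hzw : (z, w) = ∑ i, z i • ((Pi.single i 1 : ι → ℝ), (0 : ℝ)) + w • (0, 1) := by
    ext <;> simp [Prod.fst_sum, Prod.snd_sum, Finset.sum_apply, Pi.single_apply]
  rw [hzw]
  simp only [map_add, map_sum, map_smul, smul_eq_mul]

section Slater

variable {X ι : Type*}

/-- The strict epigraph of the perturbation function `z ↦ inf {f x | x ∈ K, g x ≤ z}`. -/
def strictValueEpigraph (K : Set X) (f : X → ℝ) (g : ι → X → ℝ) : Set ((ι → ℝ) × ℝ) :=
  {zw | ∃ x ∈ K, (∀ i, g i x < zw.1 i) ∧ f x < zw.2}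

variable {K : Set X} {f : X → ℝ} {g : ι → X → ℝ}

lemma convex_strictValueEpigraph [AddCommGroup X] [Module ℝ X] (hf : ConvexOn ℝ K f)
    (hg : ∀ i, ConvexOn ℝ K (g i)) : Convex ℝ (strictValueEpigraph K f g) := by
  rw [convex_iff_forall_pos]
  rintro ⟨z₁, w₁⟩ ⟨x₁, hx₁, hz₁, hw₁⟩ ⟨z₂, w₂⟩ ⟨x₂, hx₂, hz₂, hw₂⟩ a b ha hb hab
  refine ⟨a • x₁ + b • x₂, hf.1 hx₁ hx₂ ha.le hb.le hab, fun i => ?_, ?_⟩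
  · calc g i (a • x₁ + b • x₂) ≤ a * g i x₁ + b * g i x₂ :=
          (hg i).2 hx₁ hx₂ ha.le hb.le hab
      _ < a * z₁ i + b * z₂ i := by gcongr <;> simp_all
      _ = _ := by simp
  · calc f (a • x₁ + b • x₂) ≤ a * f x₁ + b * f x₂ := hf.2 hx₁ hx₂ ha.le hb.le hab
      _ < a * w₁ + b * w₂ := by gcongr
      _ = _ := by simp

lemma isOpen_strictValueEpigraph [Finite ι] : IsOpen (strictValueEpigraph K f g) := by
  have : strictValueEpigraph K f g =
      ⋃ x ∈ K, (⋂ i, {zw : (ι → ℝ) × ℝ | g i x < zw.1 i}) ∩ {zw | f x < zw.2} := by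
    ext; simp [strictValueEpigraph, and_left_comm]
  rw [this]
  exact isOpen_biUnion fun x _ => (isOpen_iInter_of_finite fun i =>
    isOpen_lt continuous_const (by fun_prop)).inter (isOpen_lt continuous_const continuous_snd)

lemma mem_strictValueEpigraph_of_le {z z' : ι → ℝ} {w w' : ℝ}
    (h : (z, w) ∈ strictValueEpigraph K f g) (hz : z ≤ z') (hw : w ≤ w') :
    (z', w') ∈ strictValueEpigraph K f g := by
  obtain ⟨x, hx, hgz, hfw⟩ := h
  exact ⟨x, hx, fun i => (hgz i).trans_le (hz i), hfw.trans_le hw⟩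

lemma StrongDual.apply_le_of_forall_strictValueEpigraph_lt {ℓ : StrongDual ℝ ((ι → ℝ) × ℝ)}
    {a : ℝ} (hℓ : ∀ c ∈ strictValueEpigraph K f g, ℓ c < a) {x : X} (hx : x ∈ K) :
    ℓ (fun i => g i x, f x) ≤ a := by
  refine le_of_forall_pos_add_mul_lt (b := ℓ (1, 1)) fun ε hε => ?_
  have hmem : (fun i => g i x + ε, f x + ε) ∈ strictValueEpigraph K f g :=
    ⟨x, hx, fun i => by simpa using hε, by simpa using hε⟩
  have hsplit : ((fun i => g i x + ε, f x + ε) : (ι → ℝ) × ℝ) =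
      (fun i => g i x, f x) + ε • (1, 1) := by
    ext <;> simp
  have := hℓ _ hmem
  rwa [hsplit, map_add, map_smul, smul_eq_mul] at this

theorem exists_lagrangeMultipliers_of_slater [AddCommGroup X] [Module ℝ X] [Fintype ι]
    (hf : ConvexOn ℝ K f) (hg : ∀ i, ConvexOn ℝ K (g i)) {x₀ : X} (hx₀ : x₀ ∈ K)
    (hslater : ∀ i, g i x₀ < 0) {M : ℝ} (hM : ∀ x ∈ K, (∀ i, g i x ≤ 0) → M ≤ f x) :
    ∃ lam : ι → ℝ, (∀ i, 0 ≤ lam i) ∧ ∀ x ∈ K, M ≤ f x + ∑ i, lam i * g i x := by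
  classical
  have hM_notMem : ((0 : ι → ℝ), M) ∉ strictValueEpigraph K f g := by
    rintro ⟨x, hx, hg0, hfM⟩
    exact (hM x hx fun i => (hg0 i).le).not_gt hfM
  obtain ⟨ℓ, hℓ⟩ := geometric_hahn_banach_open_point (convex_strictValueEpigraph hf hg)
    isOpen_strictValueEpigraph hM_notMem
  obtain ⟨μ, β, hℓ_eq⟩ := ℓ.exists_pi_prod_apply_eq
  have hℓM : ℓ (0, M) = M * β := by simp [hℓ_eq]
  set w₀ := max (f x₀) M + 1
  have h₀ : ((0 : ι → ℝ), w₀) ∈ strictValueEpigraph K f g :=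
    ⟨x₀, hx₀, hslater, by simp only [w₀]; linarith [le_max_left (f x₀) M]⟩
  have hβ : β < 0 := by
    have := hℓ _ h₀
    simp only [hℓ_eq, Pi.zero_apply, zero_mul, Finset.sum_const_zero, zero_add] at this
    nlinarith [le_max_right (f x₀) M]
  have hμ (i : ι) : μ i ≤ 0 := by
    refine nonpos_of_forall_nonneg_add_mul_lt (a := w₀ * β) (c := M * β) fun t ht => ?_
    have hsingle : (0 : ι → ℝ) ≤ Pi.single i t := Pi.single_nonneg.2 ht
    have := hℓ _ (mem_strictValueEpigraph_of_le h₀ hsingle le_rfl)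
    rw [hℓ_eq, hℓM, Finset.sum_eq_single i (by simp_all) (by simp)] at this
    simpa [add_comm] using this
  refine ⟨fun i => μ i / β, fun i => div_nonneg_of_nonpos (hμ i) hβ.le, fun x hx => ?_⟩
  have hle := ℓ.apply_le_of_forall_strictValueEpigraph_lt hℓ hx
  rw [hℓ_eq, hℓM] at hle
  have hscale : (f x + ∑ i, μ i / β * g i x) * β = ∑ i, g i x * μ i + f x * β := by
    rw [add_mul, Finset.sum_mul, add_comm]
    congr 1
    exact Finset.sum_congr rfl fun i _ => by field_simp [hβ.ne]
  exact (mul_le_mul_right_of_neg hβ).1 (hscale ▸ hle)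

end Slater

section Young

variable {p : ℝ}

lemma mul_mul_le_rpow_add_mul_rpow (hp : 1 < p) {t r : ℝ} (ht : 0 ≤ t) (hr : 0 ≤ r) :
    p * (t * r) ≤ r ^ p + (p - 1) * t ^ (p / (p - 1)) := by
  have hyoung := Real.young_inequality_of_nonneg hr ht (Real.HolderConjugate.conjExponent hp)
  rw [Real.conjExponent] at hyoung
  have hp0 : 0 < p := by linarith
  have hp1 : 0 < p - 1 := by linarith
  calc p * (t * r) ≤ p * (r ^ p / p + t ^ (p / (p - 1)) / (p / (p - 1))) := by
        rw [mul_comm t r]; gcongr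
    _ = r ^ p + (p - 1) * t ^ (p / (p - 1)) := by field_simp

lemma isLeast_mul_rpow_sub_mul (hp : 1 < p) {s c : ℝ} (hs : 0 < s) (hc : 0 ≤ c) :
    IsLeast ((fun r => s * r ^ p - c * r) '' Ici 0)
      (-((p - 1) * (s * ((1 / (p * s)) * c) ^ (p / (p - 1))))) := by
  have hps : 0 < p * s := mul_pos (by linarith) hs
  set t := (1 / (p * s)) * c
  have ht : 0 ≤ t := mul_nonneg (one_div_pos.2 hps).le hc
  have hct : c = p * s * t := by
    simp only [t]; field_simp
  refine ⟨⟨t ^ (1 / (p - 1)), Real.rpow_nonneg ht _, ?_⟩, ?_⟩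
  · have hp1 : p - 1 ≠ 0 := by linarith
    have hpow : (t ^ (1 / (p - 1))) ^ p = t ^ (p / (p - 1)) := by
      rw [← Real.rpow_mul ht]; ring_nf
    have hmul : t * t ^ (1 / (p - 1)) = t ^ (p / (p - 1)) := by
      rw [← Real.rpow_one_add' ht (by rw [one_add_div hp1]; exact div_ne_zero (by linarith) hp1)]
      congr 1; field_simp; ring
    simp only [hpow, hct, mul_assoc, hmul]
    ring
  · rintro _ ⟨r, hr, rfl⟩
    have := mul_mul_le_rpow_add_mul_rpow hp ht hr
    rw [hct]
    nlinarith

end Young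

section Modulus

variable {E ι : Type*} [Fintype E] {σ : E → ℝ} {p : ℝ} {N : ι → E → ℝ}

lemma convexOn_sum_mul_rpow (hσ : ∀ e, 0 < σ e) (hp : 1 < p) :
    ConvexOn ℝ (Ici 0) fun ρ : E → ℝ => ∑ e, σ e * ρ e ^ p :=
  ConvexOn.sum (convex_Ici 0) fun e _ =>
    (((convexOn_rpow hp.le).comp_linearMap (LinearMap.proj (R := ℝ) (φ := fun _ : E => ℝ) e)).subset
      (fun ρ (hρ : 0 ≤ ρ) => hρ e) (convex_Ici 0)).smul (hσ e).le

lemma convexOn_one_sub_sum_mul (i : ι) :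
    ConvexOn ℝ (Ici 0) fun ρ : E → ℝ => 1 - ∑ e, N i e * ρ e :=
  (convexOn_const 1 (convex_Ici 0)).sub
    ((LinearMap.proj i ∘ₗ Matrix.mulVecLin N).concaveOn (convex_Ici 0))

lemma setOf_feasible_eq_image :
    {x : ℝ | ∃ ρ : E → ℝ, (∀ e, 0 ≤ ρ e) ∧ (∀ i, 1 ≤ ∑ e, N i e * ρ e) ∧
      x = ∑ e, σ e * |ρ e| ^ p} =
    (fun ρ : E → ℝ => ∑ e, σ e * ρ e ^ p) '' {ρ | 0 ≤ ρ ∧ ∀ i, 1 ≤ ∑ e, N i e * ρ e} := by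
  ext x
  constructor
  · rintro ⟨ρ, hρ, hfeas, rfl⟩
    exact ⟨ρ, ⟨hρ, hfeas⟩, Finset.sum_congr rfl fun e _ => by rw [abs_of_nonneg (hρ e)]⟩
  · rintro ⟨ρ, ⟨hρ, hfeas⟩, rfl⟩
    exact ⟨ρ, hρ, hfeas, Finset.sum_congr rfl fun e _ => by rw [abs_of_nonneg (hρ e)]⟩

variable [Fintype ι]

lemma exists_one_lt_sum_mul (hN : ∀ i e, 0 ≤ N i e) (hNz : ∀ i, N i ≠ 0) :
    ∃ ρ : E → ℝ, 0 ≤ ρ ∧ ∀ i, 1 < ∑ e, N i e * ρ e := by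
  have hpos (i : ι) : 0 < ∑ e, N i e := by
    obtain ⟨e, he⟩ := Function.ne_iff.1 (hNz i)
    exact Finset.sum_pos' (fun e _ => hN i e) ⟨e, Finset.mem_univ e, (hN i e).lt_of_ne' he⟩
  obtain ⟨R, hR, hR1⟩ := ((eventually_ge_atTop 0).and (eventually_all.2 fun i =>
    (tendsto_id.const_mul_atTop (hpos i)).eventually_gt_atTop 1)).exists
  exact ⟨fun _ => R, fun _ => hR, fun i => by simpa [← Finset.sum_mul] using hR1 i⟩

noncomputable def lagrangian (σ : E → ℝ) (p : ℝ) (N : ι → E → ℝ) (lam : ι → ℝ) (ρ : E → ℝ) : ℝ :=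
  ∑ e, σ e * ρ e ^ p + ∑ i, lam i * (1 - ∑ e, N i e * ρ e)

variable {lam : ι → ℝ}

lemma lagrangian_eq_sum_add_sum (ρ : E → ℝ) : lagrangian σ p N lam ρ =
    ∑ i, lam i + ∑ e, (σ e * ρ e ^ p - (∑ i, lam i * N i e) * ρ e) := by
  simp only [lagrangian, mul_sub, mul_one, Finset.sum_sub_distrib, Finset.mul_sum, Finset.sum_mul]
  rw [Finset.sum_comm (f := fun i e => lam i * (N i e * ρ e))]
  simp only [mul_assoc]
  ring

lemma lagrangian_le_of_feasible (hlam : 0 ≤ lam) {ρ : E → ℝ} (hρ : ∀ i, 1 ≤ ∑ e, N i e * ρ e) :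
    lagrangian σ p N lam ρ ≤ ∑ e, σ e * ρ e ^ p :=
  add_le_of_nonpos_right <| Finset.sum_nonpos fun i _ =>
    mul_nonpos_of_nonneg_of_nonpos (hlam i) (sub_nonpos.2 (hρ i))

theorem isLeast_lagrangian (hσ : ∀ e, 0 < σ e) (hp : 1 < p) (hN : ∀ i e, 0 ≤ N i e)
    (hlam : 0 ≤ lam) : IsLeast (lagrangian σ p N lam '' Ici 0) (dualObj σ p N lam) := by
  have h := isLeast_sum_image_univ_pi fun e => isLeast_mul_rpow_sub_mul hp (hσ e)
    (c := ∑ i, lam i * N i e) (Finset.sum_nonneg fun i _ => mul_nonneg (hlam i) (hN i e))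
  rw [pi_univ_Ici] at h
  have hdual : dualObj σ p N lam = ∑ i, lam i +
      ∑ e, -((p - 1) * (σ e * ((1 / (p * σ e)) * ∑ i, lam i * N i e) ^ (p / (p - 1)))) := by
    rw [dualObj, Finset.sum_neg_distrib, Finset.mul_sum, sub_eq_add_neg]
  rw [hdual, funext lagrangian_eq_sum_add_sum, ← image_image (∑ i, lam i + ·)]
  exact (monotone_id.const_add _).map_isLeast h

end Modulus

/-- Strong duality: `Mod_{p,σ}(Γ) = sup_{λ ≥ 0} g(λ)`. -/
theorem stmt9 {E ι : Type*} [Fintype E] [Fintype ι]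
    (σ : E → ℝ) (hσ : ∀ e, 0 < σ e)
    (p : ℝ) (hp : 1 < p)
    (N : ι → E → ℝ) (hN : ∀ i e, 0 ≤ N i e) (hNz : ∀ i, N i ≠ 0) :
    sInf {x : ℝ | ∃ ρ : E → ℝ, (∀ e, 0 ≤ ρ e) ∧
        (∀ i, 1 ≤ ∑ e, N i e * ρ e) ∧ x = ∑ e, σ e * |ρ e| ^ p}
      = ⨆ lam : {l : ι → ℝ // ∀ i, 0 ≤ l i}, dualObj σ p N lam.1 := by
  rw [setOf_feasible_eq_image]
  set S := (fun ρ : E → ℝ => ∑ e, σ e * ρ e ^ p) '' {ρ | 0 ≤ ρ ∧ ∀ i, 1 ≤ ∑ e, N i e * ρ e}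
  set M := sInf S
  obtain ⟨ρ₀, hρ₀, hslater⟩ := exists_one_lt_sum_mul hN hNz
  have hbdd : BddBelow S :=
    ⟨0, forall_mem_image.2 fun ρ hρ => Finset.sum_nonneg fun e _ =>
      mul_nonneg (hσ e).le (Real.rpow_nonneg (hρ.1 e) p)⟩
  have hweak (lam : ι → ℝ) (hlam : 0 ≤ lam) : dualObj σ p N lam ≤ M :=
    le_csInf ⟨_, mem_image_of_mem _ ⟨hρ₀, fun i => (hslater i).le⟩⟩ <|
      forall_mem_image.2 fun ρ hρ =>
      ((isLeast_lagrangian hσ hp hN hlam).2 (mem_image_of_mem _ hρ.1)).trans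
        (lagrangian_le_of_feasible hlam hρ.2)
  obtain ⟨lam, hlam, hM⟩ := exists_lagrangeMultipliers_of_slater (convexOn_sum_mul_rpow hσ hp)
    convexOn_one_sub_sum_mul hρ₀ (fun i => sub_neg.2 (hslater i)) (M := M)
    fun ρ hρ hg => csInf_le hbdd (mem_image_of_mem _ ⟨hρ, fun i => sub_nonpos.1 (hg i)⟩)
  obtain ⟨ρ, hρ, hρlam⟩ := (isLeast_lagrangian hσ hp hN hlam).1
  have hstrong : M ≤ dualObj σ p N lam := hρlam ▸ hM ρ hρ
  have hgreatest : IsGreatest (range fun l : {l : ι → ℝ // ∀ i, 0 ≤ l i} => dualObj σ p N l.1) M :=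
    ⟨⟨⟨lam, hlam⟩, (hweak lam hlam).antisymm hstrong⟩, forall_mem_range.2 fun l => hweak l.1 l.2⟩
  exact hgreatest.csSup_eq.symm
end

section
/- Suppose Γ is a minimal family for Mod_2 on an unweighted graph and the overlap matrix C = N N^T is invertible. Then the unique dual optimizer is λ* = 2 C^{-1} 𝟙 and Mod_2(Γ) = 𝟙^T C^{-1} 𝟙, where 𝟙 is the all-ones vector. -/
/-! Since `C = N Nᵀ` is positive definite, the concave quadratic `g(λ) = 𝟙ᵀλ - ¼ λᵀCλ` has the
unique global maximiser `λ* = 2C⁻¹𝟙`, and all that remains is to show `λ* ≥ 0`. A maximiser `λ`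
of `g` on a large box `[0, R]^Γ` satisfies the KKT conditions `Cλ ≥ 2𝟙` and `λᵢ ((Cλ)ᵢ - 2) = 0`,
so `ρ = ½ Nᵀλ` is admissible with energy `g(λ)` and weak duality gives `Mod₂(Γ) = g(λ)`.
If some `λᵢ = 0`, then `λ` is also dual feasible for `Γ \ {i}`, so `Mod₂(Γ) ≤ Mod₂(Γ \ {i})`,
contradicting minimality. Hence `λ > 0`, `Cλ = 2𝟙`, `λ = λ*`, and
`Mod₂(Γ) = g(λ*) = ½ 𝟙ᵀλ* = 𝟙ᵀC⁻¹𝟙`. -/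

open Matrix

/-- The `2`-modulus of the subfamily indexed by `S ⊆ ι` (unweighted graph). -/
noncomputable def mod2On {E ι : Type*} [Fintype E]
    (N : ι → E → ℝ) (S : Set ι) : ℝ :=
  sInf {x : ℝ | ∃ ρ : E → ℝ, (∀ e, 0 ≤ ρ e) ∧
    (∀ i ∈ S, 1 ≤ ∑ e, N i e * ρ e) ∧ x = ∑ e, ρ e ^ 2}

/-- The dual objective for `p = 2`, `σ ≡ 1`:  `g(λ) = λᵀ𝟙 − (1/4) λᵀ C λ`. -/
noncomputable def dualObj2 {ι : Type*} [Fintype ι]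
    (C : Matrix ι ι ℝ) (lam : ι → ℝ) : ℝ :=
  ∑ i, lam i - (1 / 4) * ∑ i, ∑ j, lam i * C i j * lam j

open Filter Topology

section DualObjective

variable {ι : Type*} [Fintype ι]

lemma dualObj2_eq (C : Matrix ι ι ℝ) (lam : ι → ℝ) :
    dualObj2 C lam = ∑ i, lam i - 1 / 4 * (lam ⬝ᵥ C *ᵥ lam) := by
  simp only [dualObj2, dotProduct, mulVec, Finset.mul_sum, mul_assoc]

lemma dualObj2_add {C : Matrix ι ι ℝ} (hC : Cᵀ = C) (lam d : ι → ℝ) :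
    dualObj2 C (lam + d) =
      dualObj2 C lam + d ⬝ᵥ (1 - (1 / 2 : ℝ) • C *ᵥ lam) - 1 / 4 * (d ⬝ᵥ C *ᵥ d) := by
  have hswap : lam ⬝ᵥ C *ᵥ d = d ⬝ᵥ C *ᵥ lam := by
    rw [dotProduct_mulVec, ← mulVec_transpose, hC, dotProduct_comm]
  simp only [dualObj2_eq, Pi.add_apply, Finset.sum_add_distrib, mulVec_add, dotProduct_add,
    add_dotProduct, dotProduct_sub, dotProduct_smul, dotProduct_one, hswap, smul_eq_mul]
  ring

lemma dualObj2_add_single [DecidableEq ι] {C : Matrix ι ι ℝ} (hC : Cᵀ = C) (lam : ι → ℝ)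
    (i : ι) (t : ℝ) :
    dualObj2 C (lam + Pi.single i t) =
      dualObj2 C lam + (1 - (C *ᵥ lam) i / 2) * t - C i i / 4 * t ^ 2 := by
  rw [dualObj2_add hC, single_dotProduct, single_dotProduct, mulVec_single]
  simp only [Pi.sub_apply, Pi.one_apply, Pi.smul_apply, smul_eq_mul, col_apply,
    MulOpposite.smul_eq_mul_unop, MulOpposite.unop_op]
  ring

lemma dualObj2_add_of_mulVec_eq_two {C : Matrix ι ι ℝ} (hC : Cᵀ = C) {μ : ι → ℝ}
    (hμ : C *ᵥ μ = 2) (d : ι → ℝ) :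
    dualObj2 C (μ + d) = dualObj2 C μ - 1 / 4 * (d ⬝ᵥ C *ᵥ d) := by
  rw [dualObj2_add hC, hμ, show (1 : ι → ℝ) - (1 / 2 : ℝ) • 2 = 0 by ext; norm_num,
    dotProduct_zero, add_zero]

lemma dotProduct_mulVec_self_eq_two_mul_sum {C : Matrix ι ι ℝ} {lam : ι → ℝ} (hlam : 0 ≤ lam)
    (hcs : ∀ i, 0 < lam i → (C *ᵥ lam) i = 2) :
    lam ⬝ᵥ C *ᵥ lam = 2 * ∑ i, lam i := by
  rw [dotProduct, Finset.mul_sum]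
  refine Finset.sum_congr rfl fun i _ => ?_
  rcases (hlam i).eq_or_lt with h0 | hpos
  · simp [← h0]
  · rw [hcs i hpos, mul_comm]

lemma nonpos_of_forall_mul_le_mul_sq {a b r : ℝ} (hr : 0 < r)
    (h : ∀ t, 0 < t → t ≤ r → a * t ≤ b * t ^ 2) : a ≤ 0 := by
  have hlim : Tendsto (fun t => b * t) (𝓝[>] 0) (𝓝 0) :=
    ((continuous_const_mul b).tendsto' 0 0 (mul_zero b)).mono_left nhdsWithin_le_nhds
  refine ge_of_tendsto hlim ?_
  filter_upwards [Ioo_mem_nhdsGT hr] with t ⟨ht0, htr⟩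
  have := h t ht0 htr.le
  rw [sq, ← mul_assoc] at this
  exact le_of_mul_le_mul_right this ht0

lemma exists_dualObj2_kkt [DecidableEq ι] {C : Matrix ι ι ℝ} (hC : Cᵀ = C)
    (hnn : ∀ i j, 0 ≤ C i j) (hdiag : ∀ i, 0 < C i i) :
    ∃ lam : ι → ℝ, 0 ≤ lam ∧ 2 ≤ C *ᵥ lam ∧ ∀ i, 0 < lam i → (C *ᵥ lam) i = 2 := by
  obtain ⟨R, hR0, hR⟩ : ∃ R : ℝ, 0 ≤ R ∧ ∀ i, 2 < C i i * R :=
    ((eventually_ge_atTop 0).and (eventually_all.2 fun i =>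
      (tendsto_id.const_mul_atTop (hdiag i)).eventually_gt_atTop 2)).exists
  set K : Set (ι → ℝ) := Set.univ.pi fun _ => Set.Icc 0 R
  have hcont : Continuous (dualObj2 C) := by unfold dualObj2; fun_prop
  obtain ⟨lam, hlamK, hmax⟩ := (isCompact_univ_pi fun _ => isCompact_Icc).exists_isMaxOn
    ⟨0, fun i _ => ⟨le_rfl, hR0⟩⟩ hcont.continuousOn
  have hK : ∀ i, lam i ∈ Set.Icc 0 R := fun i => hlamK i (Set.mem_univ i)
  have hcoord : ∀ i t, 0 ≤ lam i + t → lam i + t ≤ R →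
      (1 - (C *ᵥ lam) i / 2) * t ≤ C i i / 4 * t ^ 2 := by
    intro i t h0 h1
    have hmem : lam + Pi.single i t ∈ K := by
      intro j _
      rcases eq_or_ne j i with rfl | hj
      · simp [h0, h1]
      · simpa [hj] using hK j
    have : dualObj2 C (lam + Pi.single i t) ≤ dualObj2 C lam := hmax hmem
    rw [dualObj2_add_single hC] at this
    linarith
  have hlow : ∀ i, lam i < R → 2 ≤ (C *ᵥ lam) i := fun i hi => by
    have := nonpos_of_forall_mul_le_mul_sq (sub_pos.2 hi) fun t ht htr =>
      hcoord i t (by linarith [(hK i).1]) (by linarith)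
    linarith
  have hupp : ∀ i, 0 < lam i → (C *ᵥ lam) i ≤ 2 := fun i hi => by
    have := nonpos_of_forall_mul_le_mul_sq (a := -(1 - (C *ᵥ lam) i / 2)) (b := C i i / 4) hi
      fun t ht htr => by
        have := hcoord i (-t) (by linarith) (by linarith [(hK i).2])
        rw [neg_sq] at this
        linarith
    linarith
  -- On the face `λᵢ = R` we would have `(Cλ)ᵢ ≥ Cᵢᵢ R > 2`, so decreasing `λᵢ` would increase `g`.
  have hlt : ∀ i, lam i < R := fun i => (hK i).2.lt_of_ne fun hi => by
    have hdiag_le : C i i * lam i ≤ (C *ᵥ lam) i :=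
      Finset.single_le_sum (f := fun j => C i j * lam j)
        (fun j _ => mul_nonneg (hnn i j) (hK j).1) (Finset.mem_univ i)
    have hRpos : 0 < R := pos_of_mul_pos_right (two_pos.trans (hR i)) (hdiag i).le
    rw [hi] at hdiag_le
    linarith [hupp i (hi ▸ hRpos), hR i]
  exact ⟨lam, fun i => (hK i).1, fun i => hlow i (hlt i),
    fun i hi => le_antisymm (hupp i hi) (hlow i (hlt i))⟩

end DualObjective

section GramMatrix

variable {ι E : Type*} [Fintype E] (N : Matrix ι E ℝ)

lemma eq_mul_transpose_self_of_apply {C : Matrix ι ι ℝ}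
    (hC : ∀ i j, C i j = ∑ e, N i e * N j e) : C = N * Nᵀ := by
  ext i j
  simp [hC, mul_apply]

lemma transpose_mul_transpose_self : (N * Nᵀ)ᵀ = N * Nᵀ := by
  rw [transpose_mul, transpose_transpose]

lemma mul_transpose_apply_nonneg (hN : ∀ i e, 0 ≤ N i e) (i j : ι) : 0 ≤ (N * Nᵀ) i j :=
  Finset.sum_nonneg fun e _ => mul_nonneg (hN i e) (hN j e)

lemma mod2On_le_sum_sq {S : Set ι} {ρ : E → ℝ} (h0 : 0 ≤ ρ) (hS : ∀ i ∈ S, 1 ≤ (N *ᵥ ρ) i) :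
    mod2On N S ≤ ∑ e, ρ e ^ 2 :=
  csInf_le ⟨0, by rintro _ ⟨ρ, -, -, rfl⟩; positivity⟩ ⟨ρ, h0, hS, rfl⟩

variable [Fintype ι]

lemma dotProduct_mul_transpose_mulVec (lam : ι → ℝ) :
    lam ⬝ᵥ (N * Nᵀ) *ᵥ lam = (lam ᵥ* N) ⬝ᵥ (lam ᵥ* N) := by
  rw [← mulVec_mulVec, dotProduct_mulVec, mulVec_transpose]

lemma mul_transpose_apply_self_pos [DecidableEq ι] (hdet : IsUnit (N * Nᵀ).det) (i : ι) :
    0 < (N * Nᵀ) i i := by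
  have hrow : N i ≠ 0 := fun h0 => hdet.ne_zero <|
    det_eq_zero_of_row_eq_zero i fun j => by simp [mul_apply, show N i = 0 from h0]
  rw [mul_apply]
  exact Finset.sum_pos' (fun e _ => mul_self_nonneg _) <| by
    obtain ⟨e, he⟩ := Function.ne_iff.1 hrow
    exact ⟨e, Finset.mem_univ e, mul_self_pos.2 he⟩

lemma dualObj2_le_sum_sq {lam : ι → ℝ} {ρ : E → ℝ} (h : ∀ i, lam i ≤ lam i * (N *ᵥ ρ) i) :
    dualObj2 (N * Nᵀ) lam ≤ ∑ e, ρ e ^ 2 := by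
  set v := lam ᵥ* N
  have hsq : ∑ e, ρ e ^ 2 = ρ ⬝ᵥ ρ := by simp [dotProduct, sq]
  have hcomplete : ρ ⬝ᵥ ρ = lam ⬝ᵥ N *ᵥ ρ - 1 / 4 * (v ⬝ᵥ v)
      + (ρ - (1 / 2 : ℝ) • v) ⬝ᵥ (ρ - (1 / 2 : ℝ) • v) := by
    rw [dotProduct_mulVec, dotProduct_comm v ρ]
    simp only [sub_dotProduct, dotProduct_sub, smul_dotProduct, dotProduct_smul, smul_eq_mul,
      dotProduct_comm v ρ]
    ring
  have hlin : ∑ i, lam i ≤ lam ⬝ᵥ N *ᵥ ρ := Finset.sum_le_sum fun i _ => h i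
  have hrest : 0 ≤ (ρ - (1 / 2 : ℝ) • v) ⬝ᵥ (ρ - (1 / 2 : ℝ) • v) :=
    Finset.sum_nonneg fun e _ => mul_self_nonneg _
  rw [dualObj2_eq, dotProduct_mul_transpose_mulVec, hsq]
  linarith

lemma dualObj2_le_mod2On {S : Set ι} {lam : ι → ℝ} (hlam : 0 ≤ lam) (hS : ∀ i ∉ S, lam i = 0)
    {ρ₀ : E → ℝ} (hρ₀ : 0 ≤ ρ₀) (hρ₀S : ∀ i ∈ S, 1 ≤ (N *ᵥ ρ₀) i) :
    dualObj2 (N * Nᵀ) lam ≤ mod2On N S := by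
  refine le_csInf ⟨_, ρ₀, hρ₀, hρ₀S, rfl⟩ ?_
  rintro _ ⟨ρ, -, hρ, rfl⟩
  refine dualObj2_le_sum_sq N fun i => ?_
  by_cases hi : i ∈ S
  · exact le_mul_of_one_le_right (hlam i) (hρ i hi)
  · simp [hS i hi]

lemma exists_sum_sq_eq_dualObj2 (hN : ∀ i e, 0 ≤ N i e) {lam : ι → ℝ} (hlam : 0 ≤ lam)
    (h2 : 2 ≤ (N * Nᵀ) *ᵥ lam) (hcs : ∀ i, 0 < lam i → ((N * Nᵀ) *ᵥ lam) i = 2) :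
    ∃ ρ : E → ℝ, 0 ≤ ρ ∧ 1 ≤ N *ᵥ ρ ∧ ∑ e, ρ e ^ 2 = dualObj2 (N * Nᵀ) lam := by
  refine ⟨(1 / 2 : ℝ) • (lam ᵥ* N), fun e => ?_, fun i => ?_, ?_⟩
  · exact mul_nonneg (by norm_num) (Finset.sum_nonneg fun i _ => mul_nonneg (hlam i) (hN i e))
  · rw [mulVec_smul, ← mulVec_transpose, mulVec_mulVec]
    have := h2 i
    simp only [Pi.smul_apply, smul_eq_mul, Pi.ofNat_apply] at this ⊢
    linarith
  · have hsq : ∑ e, ((1 / 2 : ℝ) • (lam ᵥ* N)) e ^ 2 = 1 / 4 * (lam ⬝ᵥ (N * Nᵀ) *ᵥ lam) := by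
      rw [dotProduct_mul_transpose_mulVec, dotProduct, Finset.mul_sum]
      exact Finset.sum_congr rfl fun e _ => by simp only [Pi.smul_apply, smul_eq_mul]; ring
    rw [hsq, dualObj2_eq, dotProduct_mulVec_self_eq_two_mul_sum hlam hcs]
    ring

lemma pos_of_mod2On_diff_singleton_lt {i : ι}
    (hmin : mod2On N (Set.univ \ {i}) < mod2On N Set.univ) {lam : ι → ℝ} (hlam : 0 ≤ lam)
    {ρ : E → ℝ} (hρ0 : 0 ≤ ρ) (hρ1 : 1 ≤ N *ᵥ ρ)
    (hmod : mod2On N Set.univ ≤ dualObj2 (N * Nᵀ) lam) :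
    0 < lam i := by
  refine (hlam i).lt_of_ne' fun hi => hmin.not_ge (hmod.trans ?_)
  refine dualObj2_le_mod2On N hlam (fun j hj => ?_) hρ0 fun j _ => hρ1 j
  rwa [show j = i by simpa using hj]

lemma dualObj2_le_of_mulVec_eq_two {μ : ι → ℝ} (hμ : (N * Nᵀ) *ᵥ μ = 2) (lam : ι → ℝ) :
    dualObj2 (N * Nᵀ) lam ≤ dualObj2 (N * Nᵀ) μ := by
  rw [← add_sub_cancel μ lam, dualObj2_add_of_mulVec_eq_two (transpose_mul_transpose_self N) hμ,
    dotProduct_mul_transpose_mulVec]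
  have : 0 ≤ ((lam - μ) ᵥ* N) ⬝ᵥ ((lam - μ) ᵥ* N) :=
    Finset.sum_nonneg fun e _ => mul_self_nonneg _
  linarith

lemma eq_of_dualObj2_le [DecidableEq ι] (hdet : IsUnit (N * Nᵀ).det) {μ : ι → ℝ}
    (hμ : (N * Nᵀ) *ᵥ μ = 2) {lam : ι → ℝ} (h : dualObj2 (N * Nᵀ) μ ≤ dualObj2 (N * Nᵀ) lam) :
    lam = μ := by
  rw [← add_sub_cancel μ lam, dualObj2_add_of_mulVec_eq_two (transpose_mul_transpose_self N) hμ,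
    dotProduct_mul_transpose_mulVec] at h
  have hzero : (lam - μ) ᵥ* N = 0 := by
    rw [← dotProduct_self_eq_zero]
    exact le_antisymm (by linarith) (Finset.sum_nonneg fun e _ => mul_self_nonneg _)
  have hker : (N * Nᵀ) *ᵥ (lam - μ) = 0 := by
    rw [← mulVec_mulVec, mulVec_transpose, hzero, mulVec_zero]
  exact sub_eq_zero.1 (eq_zero_of_mulVec_eq_zero hdet.ne_zero hker)

end GramMatrix

theorem stmt14_general {E ι : Type*} [Fintype E] [Fintype ι] [DecidableEq ι]
    (N : ι → E → ℝ) (hN : ∀ i e, 0 ≤ N i e)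
    (C : Matrix ι ι ℝ) (hC : ∀ i j, C i j = ∑ e, N i e * N j e)
    (hCinv : IsUnit C.det)
    (hmin : ∀ i : ι, mod2On N (Set.univ \ {i}) < mod2On N (Set.univ : Set ι))
    (lamstar : ι → ℝ)
    (hlamstar : lamstar = fun i => 2 * (C⁻¹ *ᵥ (fun _ => (1 : ℝ))) i) :
    (∀ i, 0 ≤ lamstar i) ∧
      (∀ lam : ι → ℝ, (∀ i, 0 ≤ lam i) → dualObj2 C lam ≤ dualObj2 C lamstar) ∧
      (∀ lam : ι → ℝ, (∀ i, 0 ≤ lam i) →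
        (∀ lam' : ι → ℝ, (∀ i, 0 ≤ lam' i) → dualObj2 C lam' ≤ dualObj2 C lam) →
        lam = lamstar) ∧
      mod2On N (Set.univ : Set ι) = ∑ i, (C⁻¹ *ᵥ (fun _ => (1 : ℝ))) i := by
  obtain rfl := eq_mul_transpose_self_of_apply N hC
  obtain ⟨lam, hlam0, hlam2, hcs⟩ := exists_dualObj2_kkt (transpose_mul_transpose_self N)
    (mul_transpose_apply_nonneg N hN) (mul_transpose_apply_self_pos N hCinv)
  obtain ⟨ρ, hρ0, hρ1, hρ⟩ := exists_sum_sq_eq_dualObj2 N hN hlam0 hlam2 hcs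
  have hmod : mod2On N Set.univ = dualObj2 _ lam :=
    le_antisymm (hρ ▸ mod2On_le_sum_sq N hρ0 fun i _ => hρ1 i)
      (dualObj2_le_mod2On N hlam0 (by simp) hρ0 fun i _ => hρ1 i)
  have hCl : _ *ᵥ lam = 2 :=
    funext fun i => hcs i (pos_of_mod2On_diff_singleton_lt N (hmin i) hlam0 hρ0 hρ1 hmod.le)
  have hlam : lamstar = lam := by
    rw [hlamstar, ← one_mulVec lam, ← nonsing_inv_mul _ hCinv, ← mulVec_mulVec, hCl]
    ext i
    simp only [mulVec, dotProduct, Pi.ofNat_apply, mul_one, Finset.mul_sum]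
    exact Finset.sum_congr rfl fun _ _ => mul_comm _ _
  subst hlam
  refine ⟨hlam0, fun μ _ => dualObj2_le_of_mulVec_eq_two N hCl μ,
    fun μ _ hμ => eq_of_dualObj2_le N hCinv hCl (hμ lamstar hlam0), ?_⟩
  rw [hmod, dualObj2_eq, dotProduct_mulVec_self_eq_two_mul_sum hlam0 hcs, hlamstar,
    ← Finset.mul_sum]
  ring

/-- for a minimal family with invertible overlap matrix `C = NNᵀ`, the
unique dual optimizer is `λ* = 2C⁻¹𝟙` and `Mod₂(Γ) = 𝟙ᵀC⁻¹𝟙`. -/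
theorem stmt14 {E ι : Type*} [Fintype E] [Fintype ι] [DecidableEq ι]
    (N : ι → E → ℝ) (hN : ∀ i e, 0 ≤ N i e) (hNz : ∀ i, N i ≠ 0)
    (C : Matrix ι ι ℝ) (hC : ∀ i j, C i j = ∑ e, N i e * N j e)
    (hCinv : IsUnit C.det)
    (hmin : ∀ i : ι, mod2On N (Set.univ \ {i}) < mod2On N (Set.univ : Set ι))
    (lamstar : ι → ℝ)
    (hlamstar : lamstar = fun i => 2 * (C⁻¹ *ᵥ (fun _ => (1 : ℝ))) i) :
    (∀ i, 0 ≤ lamstar i) ∧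
      (∀ lam : ι → ℝ, (∀ i, 0 ≤ lam i) → dualObj2 C lam ≤ dualObj2 C lamstar) ∧
      (∀ lam : ι → ℝ, (∀ i, 0 ≤ lam i) →
        (∀ lam' : ι → ℝ, (∀ i, 0 ≤ lam' i) → dualObj2 C lam' ≤ dualObj2 C lam) →
        lam = lamstar) ∧
      mod2On N (Set.univ : Set ι) = ∑ i, (C⁻¹ *ᵥ (fun _ => (1 : ℝ))) i :=
  stmt14_general N hN C hC hCinv hmin lamstar hlamstar
end

section
/- (Probabilistic interpretation of 2-modulus) For any finite family Γ of nonzero usage vectors on an unweighted graph, Mod_2(Γ) = ( min_{μ ∈ P(Γ)} μ^T N N^T μ )^{-1}, where P(Γ) is the set of probability mass functions on Γ. -/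
/-!
Write `A μ = Nᵀ μ ∈ ℝ^E` for the expected usage vector of `μ ∈ P(Γ)`, so that
`μᵀ N Nᵀ μ = ‖A μ‖²` and `A(P(Γ))` is a compact convex set not containing `0`. For admissible `ρ`,
`1 ≤ ∑ μ(γ) (Nρ)(γ) = ⟪A μ, ρ⟫ ≤ ‖A μ‖ ‖ρ‖`, so `‖ρ‖² ≥ ‖A μ‖⁻²` for every `μ`. Conversely, if
`A μ*` is the point of `A(P(Γ))` closest to the origin, the obtuse-angle criterion for the
projection onto a convex set gives `⟪A μ*, N γ⟫ ≥ ‖A μ*‖²` for every `γ`, so that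
`ρ* = A μ* / ‖A μ*‖²`, nonnegative because `N` is, is admissible with energy exactly `‖A μ*‖⁻²`.
-/

open Finset Matrix WithLp

theorem sq_norm_le_inner_of_isMinOn_norm {F : Type*} [NormedAddCommGroup F]
    [InnerProductSpace ℝ F] {K : Set F} (hK : Convex ℝ K) {x y : F} (hx : x ∈ K)
    (hmin : IsMinOn norm K x) (hy : y ∈ K) : ‖x‖ ^ 2 ≤ inner ℝ x y := by
  have h := (norm_eq_iInf_iff_real_inner_le_zero hK hx (u := 0)).1
    (by simpa using (hmin.iInf_eq hx).symm) y hy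
  rw [zero_sub, inner_neg_left, inner_sub_right, real_inner_self_eq_norm_sq] at h
  linarith

theorem LinearMap.sq_norm_le_inner_of_isMinOn {V F : Type*} [AddCommGroup V] [Module ℝ V]
    [NormedAddCommGroup F] [InnerProductSpace ℝ F] (A : V →ₗ[ℝ] F) {s : Set V}
    (hs : Convex ℝ s) {μ ν : V} (hμ : μ ∈ s) (hmin : IsMinOn (fun v => ‖A v‖) s μ)
    (hν : ν ∈ s) : ‖A μ‖ ^ 2 ≤ inner ℝ (A μ) (A ν) :=
  sq_norm_le_inner_of_isMinOn_norm (hs.linear_image A) (Set.mem_image_of_mem A hμ)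
    (by rintro _ ⟨ν', hν', rfl⟩; exact hmin hν') (Set.mem_image_of_mem A hν)

namespace Modulus

variable {E ι : Type*} [Fintype ι]

/-- `expectedUsage N μ e = ∑ γ, μ γ * N γ e`; it lands in `EuclideanSpace` so that the expected
overlap of two independent draws from `μ` is `‖expectedUsage N μ‖ ^ 2`. -/
noncomputable def expectedUsage (N : Matrix ι E ℝ) : (ι → ℝ) →ₗ[ℝ] EuclideanSpace ℝ E :=
  (WithLp.linearEquiv 2 ℝ (E → ℝ)).symm.toLinearMap ∘ₗ N.vecMulLinear

variable (N : Matrix ι E ℝ)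

theorem expectedUsage_apply (μ : ι → ℝ) : expectedUsage N μ = toLp 2 (μ ᵥ* N) := rfl

variable {N}

theorem expectedUsage_nonneg (hN : ∀ i e, 0 ≤ N i e) {μ : ι → ℝ} (hμ : μ ∈ stdSimplex ℝ ι)
    (e : E) : 0 ≤ expectedUsage N μ e :=
  sum_nonneg fun i _ => mul_nonneg (hμ.1 i) (hN i e)

theorem expectedUsage_ne_zero (hN : ∀ i e, 0 ≤ N i e) (hNz : ∀ i, N i ≠ 0) {μ : ι → ℝ}
    (hμ : μ ∈ stdSimplex ℝ ι) : expectedUsage N μ ≠ 0 := by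
  obtain ⟨i, hi⟩ : ∃ i, 0 < μ i := by
    by_contra! h
    linarith [sum_nonpos fun i (_ : i ∈ univ) => h i, hμ.2]
  obtain ⟨e, he⟩ := Function.ne_iff.1 (hNz i)
  have hpos : 0 < expectedUsage N μ e :=
    (mul_pos hi ((hN i e).lt_of_ne' he)).trans_le <|
      single_le_sum (f := fun k => μ k * N k e) (fun k _ => mul_nonneg (hμ.1 k) (hN k e))
        (mem_univ i)
  exact fun h0 => hpos.ne' (congrArg (· e) h0)

variable [Fintype E] (N)

theorem inner_expectedUsage_toLp (μ : ι → ℝ) (ρ : E → ℝ) :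
    inner ℝ (expectedUsage N μ) (toLp 2 ρ) = μ ⬝ᵥ N *ᵥ ρ := by
  rw [expectedUsage_apply, EuclideanSpace.inner_toLp_toLp, star_trivial, dotProduct_comm,
    dotProduct_mulVec]

theorem expectedOverlap_eq_sq_norm (μ : ι → ℝ) :
    ∑ i, ∑ j, (∑ e, N i e * N j e) * μ i * μ j = ‖expectedUsage N μ‖ ^ 2 := by
  rw [EuclideanSpace.real_norm_sq_eq]
  simp only [expectedUsage_apply, PiLp.toLp_apply, vecMul, dotProduct, sq, sum_mul, mul_sum]
  refine (sum_congr rfl fun i _ => sum_comm).trans (sum_comm.trans ?_)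
  exact sum_congr rfl fun e _ => sum_congr rfl fun i _ => sum_congr rfl fun j _ => by ring

theorem sum_sq_eq_sq_norm_toLp (ρ : E → ℝ) : ∑ e, ρ e ^ 2 = ‖toLp 2 ρ‖ ^ 2 := by
  simp [EuclideanSpace.real_norm_sq_eq]

theorem inv_sq_norm_expectedUsage_le_sum_sq {μ : ι → ℝ} (hμ : μ ∈ stdSimplex ℝ ι)
    {ρ : E → ℝ} (hρ : ∀ i, 1 ≤ (N *ᵥ ρ) i) :
    (‖expectedUsage N μ‖ ^ 2)⁻¹ ≤ ∑ e, ρ e ^ 2 := by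
  have h : 1 ≤ ‖expectedUsage N μ‖ * ‖toLp 2 ρ‖ :=
    calc 1 = ∑ i, μ i * 1 := by simp [hμ.2]
      _ ≤ μ ⬝ᵥ N *ᵥ ρ := sum_le_sum fun i _ => mul_le_mul_of_nonneg_left (hρ i) (hμ.1 i)
      _ = inner ℝ (expectedUsage N μ) (toLp 2 ρ) := (inner_expectedUsage_toLp N μ ρ).symm
      _ ≤ _ := real_inner_le_norm _ _
  have hpos : 0 < ‖expectedUsage N μ‖ :=
    pos_of_mul_pos_left (zero_lt_one.trans_le h) (norm_nonneg _)
  rw [sum_sq_eq_sq_norm_toLp, inv_le_iff_one_le_mul₀' (by positivity), ← mul_pow]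
  exact one_le_pow₀ h

theorem exists_isMinOn_norm_expectedUsage [Nonempty ι] :
    ∃ μ ∈ stdSimplex ℝ ι, IsMinOn (fun ν => ‖expectedUsage N ν‖) (stdSimplex ℝ ι) μ := by
  classical
  obtain ⟨i⟩ := ‹Nonempty ι›
  exact (isCompact_stdSimplex ℝ ι).exists_isMinOn ⟨_, single_mem_stdSimplex ℝ i⟩
    (continuous_norm.comp (expectedUsage N).continuous_of_finiteDimensional).continuousOn

variable {N}

theorem sq_norm_expectedUsage_le_mulVec {μ : ι → ℝ} (hμ : μ ∈ stdSimplex ℝ ι)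
    (hmin : IsMinOn (fun ν => ‖expectedUsage N ν‖) (stdSimplex ℝ ι) μ) (j : ι) :
    ‖expectedUsage N μ‖ ^ 2 ≤ (N *ᵥ (μ ᵥ* N)) j := by
  classical
  have h := (expectedUsage N).sq_norm_le_inner_of_isMinOn (convex_stdSimplex ℝ ι) hμ hmin
    (single_mem_stdSimplex ℝ j)
  rwa [real_inner_comm, expectedUsage_apply N μ, inner_expectedUsage_toLp,
    single_one_dotProduct] at h

theorem isLeast_expectedOverlap {μ : ι → ℝ} (hμ : μ ∈ stdSimplex ℝ ι)
    (hmin : IsMinOn (fun ν => ‖expectedUsage N ν‖) (stdSimplex ℝ ι) μ) :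
    IsLeast {x : ℝ | ∃ ν : ι → ℝ, (∀ i, 0 ≤ ν i) ∧ (∑ i, ν i = 1) ∧
      x = ∑ i, ∑ j, (∑ e, N i e * N j e) * ν i * ν j} (‖expectedUsage N μ‖ ^ 2) := by
  refine ⟨⟨μ, hμ.1, hμ.2, (expectedOverlap_eq_sq_norm N μ).symm⟩, ?_⟩
  rintro _ ⟨ν, hν₀, hν₁, rfl⟩
  rw [expectedOverlap_eq_sq_norm]
  exact pow_le_pow_left₀ (norm_nonneg _) (hmin ⟨hν₀, hν₁⟩) 2

theorem isLeast_energy (hN : ∀ i e, 0 ≤ N i e) (hNz : ∀ i, N i ≠ 0) {μ : ι → ℝ}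
    (hμ : μ ∈ stdSimplex ℝ ι)
    (hmin : IsMinOn (fun ν => ‖expectedUsage N ν‖) (stdSimplex ℝ ι) μ) :
    IsLeast {x : ℝ | ∃ ρ : E → ℝ, (∀ e, 0 ≤ ρ e) ∧ (∀ i, 1 ≤ ∑ e, N i e * ρ e) ∧
      x = ∑ e, ρ e ^ 2} (‖expectedUsage N μ‖ ^ 2)⁻¹ := by
  set m := ‖expectedUsage N μ‖ ^ 2 with hm_def
  have hm : 0 < m := pow_pos (norm_pos_iff.2 (expectedUsage_ne_zero hN hNz hμ)) 2
  refine ⟨⟨m⁻¹ • (μ ᵥ* N), fun e => ?_, fun j => ?_, ?_⟩, ?_⟩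
  · exact mul_nonneg (inv_nonneg.2 hm.le) (expectedUsage_nonneg hN hμ e)
  · change 1 ≤ (N *ᵥ (m⁻¹ • (μ ᵥ* N))) j
    rw [mulVec_smul, Pi.smul_apply, smul_eq_mul, ← div_eq_inv_mul, one_le_div hm]
    exact sq_norm_expectedUsage_le_mulVec hμ hmin j
  · rw [sum_sq_eq_sq_norm_toLp, toLp_smul, norm_smul, mul_pow, ← expectedUsage_apply,
      ← hm_def, norm_inv, Real.norm_of_nonneg hm.le]
    field_simp
  · rintro _ ⟨ρ, -, hρ, rfl⟩
    exact inv_sq_norm_expectedUsage_le_sum_sq N hμ hρ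

end Modulus

/-- Probabilistic interpretation of 2-modulus:
`Mod₂(Γ) = (min_{μ ∈ P(Γ)} μᵀ N Nᵀ μ)⁻¹`, the reciprocal of the minimal expected
overlap of two i.i.d. objects drawn from `μ`. -/
theorem stmt15 {E ι : Type*} [Fintype E] [Fintype ι] [Nonempty ι]
    (N : ι → E → ℝ) (hN : ∀ i e, 0 ≤ N i e) (hNz : ∀ i, N i ≠ 0) :
    sInf {x : ℝ | ∃ ρ : E → ℝ, (∀ e, 0 ≤ ρ e) ∧
        (∀ i, 1 ≤ ∑ e, N i e * ρ e) ∧ x = ∑ e, ρ e ^ 2}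
      = (sInf {x : ℝ | ∃ μ : ι → ℝ, (∀ i, 0 ≤ μ i) ∧ (∑ i, μ i = 1) ∧
          x = ∑ i, ∑ j, (∑ e, N i e * N j e) * μ i * μ j})⁻¹ := by
  obtain ⟨μ, hμ, hmin⟩ := Modulus.exists_isMinOn_norm_expectedUsage N
  rw [(Modulus.isLeast_energy hN hNz hμ hmin).csInf_eq,
    (Modulus.isLeast_expectedOverlap hμ hmin).csInf_eq]
end

section
/- If μ* is optimal for min_{μ ∈ P(Γ)} μ^T N N^T μ and ρ* is the extremal density for Mod_2(Γ), then ρ*(e)/Mod_2(Γ) = (N^T μ*)(e) for all e ∈ E; i.e., the extremal density is proportional to the expected edge usage under μ*. -/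
/-!
Put `f = Nᵀμ* = ∑ᵢ μ*ᵢ Nᵢ` in `ℓ²(E)`. Since `μᵀNNᵀμ = ‖Nᵀμ‖²`, the vector `f` is the point of
least norm in the convex hull of the rows `Nᵢ`, and the first-order condition for this
projection reads `‖f‖² ≤ ⟪f, Nᵢ⟫` for every `i`. Hence `f / ‖f‖²` is an admissible density of
energy `‖f‖⁻²`, so `‖ρ*‖² ≤ ‖f‖⁻²`. On the other hand averaging the constraints of `ρ*` under
`μ*` gives `⟪f, ρ*⟫ ≥ 1`, and then `‖ρ* - f / ‖f‖²‖² = ‖ρ*‖² - 2⟪f, ρ*⟫/‖f‖² + ‖f‖⁻² ≤ 0`.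
So `ρ* = f / ‖f‖²` and `Mod₂(Γ) = ‖f‖⁻²`.
-/

open Finset
open scoped InnerProductSpace

section InnerProductSpace

variable {F : Type*} [NormedAddCommGroup F] [InnerProductSpace ℝ F]

theorem norm_sq_le_real_inner_of_isMinOn {K : Set F} (hK : Convex ℝ K) {v w : F}
    (hv : v ∈ K) (hw : w ∈ K) (hmin : IsMinOn (‖·‖) K v) : ‖v‖ ^ 2 ≤ ⟪v, w⟫_ℝ := by
  have : Nonempty K := ⟨⟨v, hv⟩⟩
  have hinf : ‖0 - v‖ = ⨅ u : K, ‖0 - (u : F)‖ := by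
    simp only [zero_sub, norm_neg]
    exact le_antisymm (le_ciInf fun u => isMinOn_iff.1 hmin u u.2)
      (ciInf_le (f := fun u : K => ‖(u : F)‖) ⟨0, Set.forall_mem_range.2 fun _ => norm_nonneg _⟩
        ⟨v, hv⟩)
  have := (norm_eq_iInf_iff_real_inner_le_zero hK hv).1 hinf w hw
  rw [zero_sub, inner_neg_left, inner_sub_right, real_inner_self_eq_norm_sq] at this
  linarith

theorem norm_inv_norm_sq_smul (f : F) : ‖(‖f‖ ^ 2)⁻¹ • f‖ = ‖f‖⁻¹ := by
  rw [norm_smul, norm_inv, norm_pow, norm_norm]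
  rcases eq_or_ne ‖f‖ 0 with hf | hf
  · simp [hf]
  · field_simp

theorem ne_zero_of_one_le_real_inner {f ρ : F} (h : 1 ≤ ⟪f, ρ⟫_ℝ) : f ≠ 0 := by
  rintro rfl
  rw [inner_zero_left] at h
  exact absurd h (by norm_num)

theorem one_le_real_inner_inv_norm_sq_smul {f w : F} (hf : f ≠ 0) (h : ‖f‖ ^ 2 ≤ ⟪f, w⟫_ℝ) :
    1 ≤ ⟪w, (‖f‖ ^ 2)⁻¹ • f⟫_ℝ := by
  rwa [real_inner_smul_right, real_inner_comm, one_le_inv_mul₀ (by positivity)]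

theorem eq_inv_norm_sq_smul_of_one_le_inner {f ρ : F} (hinner : 1 ≤ ⟪f, ρ⟫_ℝ)
    (hnorm : ‖ρ‖ ≤ ‖(‖f‖ ^ 2)⁻¹ • f‖) : ρ = (‖f‖ ^ 2)⁻¹ • f := by
  have hf2 : 0 < ‖f‖ ^ 2 := by
    have := ne_zero_of_one_le_real_inner hinner
    positivity
  rw [norm_inv_norm_sq_smul] at hnorm
  have hρ : ‖ρ‖ ^ 2 ≤ (‖f‖ ^ 2)⁻¹ := by
    rw [← inv_pow]; exact pow_le_pow_left₀ (norm_nonneg ρ) hnorm 2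
  have hdist : ‖ρ - (‖f‖ ^ 2)⁻¹ • f‖ ^ 2 ≤ 0 := by
    rw [norm_sub_sq_real, real_inner_smul_right, norm_inv_norm_sq_smul, real_inner_comm, inv_pow]
    nlinarith [inv_pos.2 hf2]
  rw [← sub_eq_zero, ← norm_eq_zero]
  exact pow_eq_zero_iff two_ne_zero |>.1 (le_antisymm hdist (sq_nonneg _))

variable {ι : Type*} [Fintype ι]

theorem norm_sum_smul_sq (r : ι → F) (μ : ι → ℝ) :
    ‖∑ i, μ i • r i‖ ^ 2 = ∑ i, ∑ j, ⟪r i, r j⟫_ℝ * μ i * μ j := by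
  rw [← real_inner_self_eq_norm_sq, sum_inner]
  simp_rw [inner_sum, real_inner_smul_left, real_inner_smul_right]
  exact sum_congr rfl fun i _ => sum_congr rfl fun j _ => by ring

theorem one_le_inner_sum_smul {r : ι → F} {ρ : F} (hρ : ∀ i, 1 ≤ ⟪r i, ρ⟫_ℝ) {μ : ι → ℝ}
    (hμ : μ ∈ stdSimplex ℝ ι) : 1 ≤ ⟪∑ i, μ i • r i, ρ⟫_ℝ := by
  calc 1 = ∑ i, μ i * 1 := by simp [hμ.2]
    _ ≤ ∑ i, μ i * ⟪r i, ρ⟫_ℝ := sum_le_sum fun i _ => mul_le_mul_of_nonneg_left (hρ i) (hμ.1 i)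
    _ = ⟪∑ i, μ i • r i, ρ⟫_ℝ := by simp_rw [sum_inner, real_inner_smul_left]

theorem norm_sq_le_inner_of_isMinOn_stdSimplex (r : ι → F) {μ : ι → ℝ}
    (hμ : μ ∈ stdSimplex ℝ ι) (hmin : IsMinOn (fun ν => ‖∑ i, ν i • r i‖) (stdSimplex ℝ ι) μ)
    (i : ι) : ‖∑ j, μ j • r j‖ ^ 2 ≤ ⟪∑ j, μ j • r j, r i⟫_ℝ := by
  classical
  have hK := (convex_stdSimplex ℝ ι).linear_image (Fintype.linearCombination ℝ r)
  refine norm_sq_le_real_inner_of_isMinOn hK ⟨μ, hμ, rfl⟩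
    ⟨Pi.single i 1, single_mem_stdSimplex ℝ i, by simp⟩ ?_
  rintro _ ⟨ν, hν, rfl⟩
  exact hmin hν

end InnerProductSpace

theorem EuclideanSpace.sum_mul_eq_real_inner_toLp {E : Type*} [Fintype E] (x y : E → ℝ) :
    ∑ e, x e * y e = ⟪WithLp.toLp 2 x, WithLp.toLp 2 y⟫_ℝ := by
  simp [EuclideanSpace.inner_toLp_toLp, dotProduct, mul_comm]

theorem EuclideanSpace.norm_sum_smul_toLp_sq {E ι : Type*} [Fintype E] [Fintype ι]
    (N : ι → E → ℝ) (μ : ι → ℝ) :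
    ‖∑ i, μ i • WithLp.toLp 2 (N i)‖ ^ 2 = ∑ i, ∑ j, (∑ e, N i e * N j e) * μ i * μ j := by
  simp only [norm_sum_smul_sq, ← EuclideanSpace.sum_mul_eq_real_inner_toLp]

theorem stmt16_general {E ι : Type*} [Fintype E] [Fintype ι]
    (N : ι → E → ℝ) (hN : ∀ i e, 0 ≤ N i e)
    (ρstar : E → ℝ)
    (hρadm : ∀ i, 1 ≤ ∑ e, N i e * ρstar e)
    (hρmin : ∀ ρ : E → ℝ, (∀ e, 0 ≤ ρ e) → (∀ i, 1 ≤ ∑ e, N i e * ρ e) →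
      ∑ e, ρstar e ^ 2 ≤ ∑ e, ρ e ^ 2)
    (μstar : ι → ℝ)
    (hμpos : ∀ i, 0 ≤ μstar i) (hμsum : ∑ i, μstar i = 1)
    (hμmin : ∀ μ : ι → ℝ, (∀ i, 0 ≤ μ i) → (∑ i, μ i = 1) →
      ∑ i, ∑ j, (∑ e, N i e * N j e) * μstar i * μstar j
        ≤ ∑ i, ∑ j, (∑ e, N i e * N j e) * μ i * μ j) :
    ∀ e, ρstar e / (∑ e', ρstar e' ^ 2) = ∑ i, N i e * μstar i := by
  set r : ι → EuclideanSpace ℝ E := fun i => WithLp.toLp 2 (N i)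
  set f := ∑ i, μstar i • r i
  have hf (e : E) : f e = ∑ i, N i e * μstar i := by simp [f, r, mul_comm]
  have hμ : μstar ∈ stdSimplex ℝ ι := ⟨hμpos, hμsum⟩
  have hmin : IsMinOn (fun ν => ‖∑ i, ν i • r i‖) (stdSimplex ℝ ι) μstar := fun ν hν => by
    have := hμmin ν hν.1 hν.2
    rw [← EuclideanSpace.norm_sum_smul_toLp_sq, ← EuclideanSpace.norm_sum_smul_toLp_sq] at this
    exact (pow_le_pow_iff_left₀ (norm_nonneg _) (norm_nonneg _) two_ne_zero).1 this
  have hfρ : 1 ≤ ⟪f, WithLp.toLp 2 ρstar⟫_ℝ :=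
    one_le_inner_sum_smul
      (fun i => (hρadm i).trans_eq (EuclideanSpace.sum_mul_eq_real_inner_toLp _ _)) hμ
  have hf0 : f ≠ 0 := ne_zero_of_one_le_real_inner hfρ
  set ρ := (‖f‖ ^ 2)⁻¹ • f
  have hρ_nonneg (e : E) : 0 ≤ ρ e := by
    simp only [ρ, PiLp.smul_apply, smul_eq_mul, hf]
    exact mul_nonneg (by positivity) (sum_nonneg fun i _ => mul_nonneg (hN i e) (hμpos i))
  have hρ_adm (i : ι) : 1 ≤ ∑ e, N i e * ρ e := by
    rw [EuclideanSpace.sum_mul_eq_real_inner_toLp, WithLp.toLp_ofLp]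
    exact one_le_real_inner_inv_norm_sq_smul hf0
      (norm_sq_le_inner_of_isMinOn_stdSimplex r hμ hmin i)
  have hρstar : WithLp.toLp 2 ρstar = ρ := by
    refine eq_inv_norm_sq_smul_of_one_le_inner hfρ ?_
    have := hρmin ρ hρ_nonneg hρ_adm
    rwa [← EuclideanSpace.real_norm_sq_eq, ← EuclideanSpace.real_norm_sq_eq,
      pow_le_pow_iff_left₀ (norm_nonneg _) (norm_nonneg _) two_ne_zero] at this
  intro e
  have hρe : ρstar e = (‖f‖ ^ 2)⁻¹ * f e := by simpa [ρ] using congrArg (· e) hρstar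
  rw [← EuclideanSpace.real_norm_sq_eq, hρstar, norm_inv_norm_sq_smul, ← hf, hρe]
  field_simp [norm_ne_zero_iff.2 hf0]

/-- if `μ*` minimizes the expected overlap `μᵀNNᵀμ` over the simplex and
`ρ*` is the extremal density for `Mod₂(Γ)`, then `ρ*(e)/Mod₂(Γ) = (Nᵀμ*)(e)` for all
edges `e`. -/
theorem stmt16 {E ι : Type*} [Fintype E] [Fintype ι] [Nonempty ι]
    (N : ι → E → ℝ) (hN : ∀ i e, 0 ≤ N i e) (hNz : ∀ i, N i ≠ 0)
    (ρstar : E → ℝ)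
    (hρpos : ∀ e, 0 ≤ ρstar e)
    (hρadm : ∀ i, 1 ≤ ∑ e, N i e * ρstar e)
    (hρmin : ∀ ρ : E → ℝ, (∀ e, 0 ≤ ρ e) → (∀ i, 1 ≤ ∑ e, N i e * ρ e) →
      ∑ e, ρstar e ^ 2 ≤ ∑ e, ρ e ^ 2)
    (μstar : ι → ℝ)
    (hμpos : ∀ i, 0 ≤ μstar i) (hμsum : ∑ i, μstar i = 1)
    (hμmin : ∀ μ : ι → ℝ, (∀ i, 0 ≤ μ i) → (∑ i, μ i = 1) →
      ∑ i, ∑ j, (∑ e, N i e * N j e) * μstar i * μstar j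
        ≤ ∑ i, ∑ j, (∑ e, N i e * N j e) * μ i * μ j) :
    ∀ e, ρstar e / (∑ e', ρstar e' ^ 2) = ∑ i, N i e * μstar i :=
  stmt16_general N hN ρstar hρadm hρmin μstar hμpos hμsum hμmin
end

section
/- (Two-sided bounds) For any finite family Γ, any admissible ρ ∈ Adm(Γ), and any pmf μ ∈ P(Γ): ρ^Tρ ≥ Mod_2(Γ) ≥ (μ^T N N^T μ)^{-1}. -/
/-!
Upper bound: `ρ` itself is admissible. Lower bound: averaging the constraints `(Nρ')ᵢ ≥ 1`
against `μ` gives `⟪Nᵀμ, ρ'⟫ ≥ 1` for every admissible `ρ'`, and Cauchy–Schwarz turns this into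
`‖Nᵀμ‖² ‖ρ'‖² ≥ 1`, where `‖Nᵀμ‖² = μᵀNNᵀμ`.
-/

open Finset

/-- `Mod₂(Γ)` is the infimum of this set. -/
def admissibleEnergies {E ι : Type*} [Fintype E] (N : ι → E → ℝ) : Set ℝ :=
  {x : ℝ | ∃ ρ : E → ℝ, (∀ e, 0 ≤ ρ e) ∧ (∀ i, 1 ≤ ∑ e, N i e * ρ e) ∧ x = ∑ e, ρ e ^ 2}

theorem bddBelow_admissibleEnergies {E ι : Type*} [Fintype E] (N : ι → E → ℝ) :
    BddBelow (admissibleEnergies N) := by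
  refine ⟨0, ?_⟩
  rintro _ ⟨ρ, -, -, rfl⟩
  positivity

theorem sum_sum_gram_mul_mul_eq_sum_sq {E ι R : Type*} [Fintype E] [Fintype ι] [CommSemiring R]
    (N : ι → E → R) (μ : ι → R) :
    ∑ i, ∑ j, (∑ e, N i e * N j e) * μ i * μ j = ∑ e, (∑ i, μ i * N i e) ^ 2 := by
  simp only [sq, sum_mul, mul_sum]
  conv_rhs => rw [sum_comm]
  refine sum_congr rfl fun i _ => ?_
  conv_rhs => rw [sum_comm]
  exact sum_congr rfl fun j _ => sum_congr rfl fun e _ => by ring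

theorem one_le_sum_transpose_mul_of_admissible {E ι : Type*} [Fintype E] [Fintype ι]
    (N : ι → E → ℝ) {ρ : E → ℝ} (hρ : ∀ i, 1 ≤ ∑ e, N i e * ρ e) {μ : ι → ℝ} (hμpos : ∀ i, 0 ≤ μ i)
    (hμsum : ∑ i, μ i = 1) :
    1 ≤ ∑ e, (∑ i, μ i * N i e) * ρ e := calc
  (1 : ℝ) = ∑ i, μ i * 1 := by simp [hμsum]
  _ ≤ ∑ i, μ i * ∑ e, N i e * ρ e :=
    sum_le_sum fun i _ => mul_le_mul_of_nonneg_left (hρ i) (hμpos i)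
  _ = ∑ e, (∑ i, μ i * N i e) * ρ e := by
    simp only [sum_mul, mul_sum]
    rw [sum_comm]
    exact sum_congr rfl fun i _ => sum_congr rfl fun e _ => by ring

theorem inv_sum_sq_le_sum_sq_of_one_le_sum_mul {E : Type*} (s : Finset E) {a ρ : E → ℝ}
    (h : 1 ≤ ∑ e ∈ s, a e * ρ e) : (∑ e ∈ s, a e ^ 2)⁻¹ ≤ ∑ e ∈ s, ρ e ^ 2 := by
  have hCS : 1 ≤ (∑ e ∈ s, a e ^ 2) * ∑ e ∈ s, ρ e ^ 2 := calc
    (1 : ℝ) ≤ (∑ e ∈ s, a e * ρ e) ^ 2 := one_le_pow₀ h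
    _ ≤ (∑ e ∈ s, a e ^ 2) * ∑ e ∈ s, ρ e ^ 2 := sum_mul_sq_le_sq_mul_sq s a ρ
  have ha : 0 < ∑ e ∈ s, a e ^ 2 := by
    by_contra! ha
    have : (∑ e ∈ s, a e ^ 2) * ∑ e ∈ s, ρ e ^ 2 ≤ 0 :=
      mul_nonpos_of_nonpos_of_nonneg ha (sum_nonneg fun e _ => sq_nonneg (ρ e))
    linarith
  rwa [inv_le_iff_one_le_mul₀ ha, mul_comm]

theorem stmt17_general {E ι : Type*} [Fintype E] [Fintype ι]
    (N : ι → E → ℝ)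
    (ρ : E → ℝ) (hρpos : ∀ e, 0 ≤ ρ e) (hρadm : ∀ i, 1 ≤ ∑ e, N i e * ρ e)
    (μ : ι → ℝ) (hμpos : ∀ i, 0 ≤ μ i) (hμsum : ∑ i, μ i = 1) :
    (∑ i, ∑ j, (∑ e, N i e * N j e) * μ i * μ j)⁻¹
        ≤ sInf {x : ℝ | ∃ ρ' : E → ℝ, (∀ e, 0 ≤ ρ' e) ∧
            (∀ i, 1 ≤ ∑ e, N i e * ρ' e) ∧ x = ∑ e, ρ' e ^ 2} ∧
      sInf {x : ℝ | ∃ ρ' : E → ℝ, (∀ e, 0 ≤ ρ' e) ∧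
          (∀ i, 1 ≤ ∑ e, N i e * ρ' e) ∧ x = ∑ e, ρ' e ^ 2}
        ≤ ∑ e, ρ e ^ 2 := by
  change _ ≤ sInf (admissibleEnergies N) ∧ sInf (admissibleEnergies N) ≤ _
  have hρmem : ∑ e, ρ e ^ 2 ∈ admissibleEnergies N := ⟨ρ, hρpos, hρadm, rfl⟩
  refine ⟨le_csInf ⟨_, hρmem⟩ ?_, csInf_le (bddBelow_admissibleEnergies N) hρmem⟩
  rintro _ ⟨ρ', -, hρ'adm, rfl⟩
  rw [sum_sum_gram_mul_mul_eq_sum_sq]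
  exact inv_sum_sq_le_sum_sq_of_one_le_sum_mul univ
    (one_le_sum_transpose_mul_of_admissible N hρ'adm hμpos hμsum)

/-- Two-sided bounds: for any admissible `ρ` and any pmf `μ`,
`ρᵀρ ≥ Mod₂(Γ) ≥ (μᵀNNᵀμ)⁻¹`. -/
theorem stmt17 {E ι : Type*} [Fintype E] [Fintype ι] [Nonempty ι]
    (N : ι → E → ℝ) (hN : ∀ i e, 0 ≤ N i e) (hNz : ∀ i, N i ≠ 0)
    (ρ : E → ℝ) (hρpos : ∀ e, 0 ≤ ρ e) (hρadm : ∀ i, 1 ≤ ∑ e, N i e * ρ e)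
    (μ : ι → ℝ) (hμpos : ∀ i, 0 ≤ μ i) (hμsum : ∑ i, μ i = 1) :
    (∑ i, ∑ j, (∑ e, N i e * N j e) * μ i * μ j)⁻¹
        ≤ sInf {x : ℝ | ∃ ρ' : E → ℝ, (∀ e, 0 ≤ ρ' e) ∧
            (∀ i, 1 ≤ ∑ e, N i e * ρ' e) ∧ x = ∑ e, ρ' e ^ 2} ∧
      sInf {x : ℝ | ∃ ρ' : E → ℝ, (∀ e, 0 ≤ ρ' e) ∧
          (∀ i, 1 ≤ ∑ e, N i e * ρ' e) ∧ x = ∑ e, ρ' e ^ 2}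
        ≤ ∑ e, ρ e ^ 2 :=
  stmt17_general N ρ hρpos hρadm μ hμpos hμsum
end

section
/- (Probabilistic dual for general p) For 1 < p < ∞ with conjugate exponent q = p/(p−1) and weights σ > 0, Mod_{p,σ}(Γ)^{-1/p} = ( min_{μ ∈ P(Γ)} ∑_{e∈E} σ(e)^{-q/p} ( (N^T μ)(e) )^q )^{1/q}. -/
/-!
The dual objective `D μ = ∑ e, σ e ^ (-(q / p)) * (Nᵀμ) e ^ q` is continuous on the compact
simplex, so it attains its minimum `M > 0` at some `μ₀`. For every admissible `ρ` we have
`1 ≤ ∑ e, ρ e * (Nᵀμ₀) e`, and Hölder's inequality turns this into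
`M ^ (1 - p) ≤ ∑ e, σ e * ρ e ^ p`. Conversely, minimality of `μ₀` along the segments towards the
vertices of the simplex says exactly that `ρ* = σ ^ (-(q / p)) * (Nᵀμ₀) ^ (q - 1) / M` is
admissible, and its energy is `M ^ (1 - p)`. Hence `Mod = M ^ (1 - p)`, and
`Mod ^ (-(1 / p)) = M ^ (1 / q)`.
-/

open Finset Set

lemma Real.rpow_sub_one_mul_self {x : ℝ} (hx : 0 ≤ x) {q : ℝ} (hq : q ≠ 0) :
    x ^ (q - 1) * x = x ^ q := by
  conv_rhs => rw [← sub_add_cancel q 1, Real.rpow_add' hx (by simpa using hq), Real.rpow_one]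

lemma IsMinOn.hasDerivAt_nonneg_of_Icc {g : ℝ → ℝ} {g' a b : ℝ} (hab : a < b)
    (hmin : IsMinOn g (Icc a b) a) (hg : HasDerivAt g g' a) : 0 ≤ g' := by
  have hcone : (b - a) ∈ posTangentConeAt (Icc a b) a :=
    sub_mem_posTangentConeAt_of_segment_subset (segment_eq_Icc hab.le).subset
  have hslope := hmin.localize.hasFDerivWithinAt_nonneg hg.hasFDerivAt.hasFDerivWithinAt hcone
  rw [ContinuousLinearMap.toSpanSingleton_apply, smul_eq_mul] at hslope
  exact nonneg_of_mul_nonneg_right hslope (sub_pos.2 hab)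

section

variable {E : Type*} [Fintype E] {p q : ℝ} {σ : E → ℝ}

lemma sum_mul_le_weighted_Lp_mul_Lq (hpq : p.HolderConjugate q) (hσ : ∀ e, 0 < σ e)
    {f g : E → ℝ} (hf : ∀ e, 0 ≤ f e) (hg : ∀ e, 0 ≤ g e) :
    ∑ e, f e * g e ≤
      (∑ e, σ e * f e ^ p) ^ (1 / p) * (∑ e, σ e ^ (-(q / p)) * g e ^ q) ^ (1 / q) := by
  have holder := Real.inner_le_Lp_mul_Lq_of_nonneg univ hpq
    (f := fun e => σ e ^ (1 / p) * f e) (g := fun e => σ e ^ (-(1 / p)) * g e)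
    (fun e _ => mul_nonneg (Real.rpow_nonneg (hσ e).le _) (hf e))
    (fun e _ => mul_nonneg (Real.rpow_nonneg (hσ e).le _) (hg e))
  have hfg : ∑ e, σ e ^ (1 / p) * f e * (σ e ^ (-(1 / p)) * g e) = ∑ e, f e * g e :=
    sum_congr rfl fun e _ => by
      rw [mul_mul_mul_comm, ← Real.rpow_add (hσ e), add_neg_cancel, Real.rpow_zero, one_mul]
  have hfp : ∑ e, (σ e ^ (1 / p) * f e) ^ p = ∑ e, σ e * f e ^ p :=
    sum_congr rfl fun e _ => by
      rw [Real.mul_rpow (Real.rpow_nonneg (hσ e).le _) (hf e), ← Real.rpow_mul (hσ e).le,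
        one_div_mul_cancel hpq.ne_zero, Real.rpow_one]
  have hgq : ∑ e, (σ e ^ (-(1 / p)) * g e) ^ q = ∑ e, σ e ^ (-(q / p)) * g e ^ q :=
    sum_congr rfl fun e _ => by
      rw [Real.mul_rpow (Real.rpow_nonneg (hσ e).le _) (hg e), ← Real.rpow_mul (hσ e).le]
      ring_nf
  rwa [hfg, hfp, hgq] at holder

lemma mul_rpow_mul_rpow_sub_one (hpq : p.HolderConjugate q) {s a : ℝ} (hs : 0 < s) (ha : 0 ≤ a) :
    s * (s ^ (-(q / p)) * a ^ (q - 1)) ^ p = s ^ (-(q / p)) * a ^ q := by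
  rw [Real.mul_rpow (Real.rpow_nonneg hs.le _) (Real.rpow_nonneg ha _), ← Real.rpow_mul hs.le,
    ← Real.rpow_mul ha, hpq.symm.sub_one_mul_conj, ← mul_assoc, hpq.symm.div_conj_eq_sub_one,
    neg_mul, hpq.symm.sub_one_mul_conj, show -(q - 1) = 1 + -q by ring, Real.rpow_add hs,
    Real.rpow_one]

end

section

variable {E ι : Type*} [Fintype ι]

def expectedUsage (N : ι → E → ℝ) (μ : ι → ℝ) (e : E) : ℝ := ∑ i, N i e * μ i

noncomputable def dualEnergy [Fintype E] (w : E → ℝ) (q : ℝ) (N : ι → E → ℝ) (μ : ι → ℝ) : ℝ :=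
  ∑ e, w e * expectedUsage N μ e ^ q

section

variable {N : ι → E → ℝ}

lemma expectedUsage_nonneg (hN : ∀ i e, 0 ≤ N i e) {μ : ι → ℝ} (hμ : ∀ i, 0 ≤ μ i) (e : E) :
    0 ≤ expectedUsage N μ e :=
  sum_nonneg fun i _ => mul_nonneg (hN i e) (hμ i)

lemma expectedUsage_add_smul_sub (μ ν : ι → ℝ) (t : ℝ) (e : E) :
    expectedUsage N (μ + t • (ν - μ)) e =
      expectedUsage N μ e + t * (expectedUsage N ν e - expectedUsage N μ e) := by
  simp only [expectedUsage, Pi.add_apply, Pi.smul_apply, Pi.sub_apply, smul_eq_mul, mul_add,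
    sum_add_distrib, mul_sum, ← sum_sub_distrib]
  congr 1
  exact sum_congr rfl fun i _ => by ring

lemma expectedUsage_single [DecidableEq ι] (γ : ι) (e : E) :
    expectedUsage N (Pi.single γ 1) e = N γ e := by
  simp [expectedUsage, Pi.single_apply]

lemma hasDerivAt_dualEnergy_add_smul_sub [Fintype E] (w : E → ℝ) {q : ℝ} (hq : 1 ≤ q)
    (μ ν : ι → ℝ) :
    HasDerivAt (fun t : ℝ => dualEnergy w q N (μ + t • (ν - μ)))
      (q * ∑ e, w e * (expectedUsage N μ e ^ (q - 1) *
        (expectedUsage N ν e - expectedUsage N μ e))) 0 := by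
  have hfun : (fun t : ℝ => dualEnergy w q N (μ + t • (ν - μ))) = fun t => ∑ e, w e *
      (expectedUsage N μ e + t * (expectedUsage N ν e - expectedUsage N μ e)) ^ q := by
    ext t
    simp only [dualEnergy, expectedUsage_add_smul_sub]
  rw [hfun, mul_sum]
  refine HasDerivAt.fun_sum fun e _ => ?_
  have hline := ((hasDerivAt_id (0 : ℝ)).mul_const
    (expectedUsage N ν e - expectedUsage N μ e)).const_add (expectedUsage N μ e)
  refine ((hline.rpow_const (Or.inr hq)).const_mul (w e)).congr_deriv ?_
  simp only [id, zero_mul, add_zero]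
  ring

end

section

variable [Fintype E] {w : E → ℝ} {q : ℝ} {N : ι → E → ℝ}

lemma exists_isMinOn_dualEnergy [Nonempty ι] (w : E → ℝ) (hq : 0 ≤ q) (N : ι → E → ℝ) :
    ∃ μ₀ ∈ stdSimplex ℝ ι, IsMinOn (dualEnergy w q N) (stdSimplex ℝ ι) μ₀ := by
  classical
  refine (isCompact_stdSimplex ℝ ι).exists_isMinOn
    ⟨_, single_mem_stdSimplex ℝ (Classical.arbitrary ι)⟩ (Continuous.continuousOn ?_)
  exact continuous_finsetSum _ fun e _ => continuous_const.mul <|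
    (continuous_finsetSum _ fun i _ => continuous_const.mul (continuous_apply i)).rpow_const
      fun _ => Or.inr hq

lemma dualEnergy_pos (hw : ∀ e, 0 < w e) (hN : ∀ i e, 0 ≤ N i e) (hNz : ∀ i, N i ≠ 0)
    {μ : ι → ℝ} (hμ : μ ∈ stdSimplex ℝ ι) : 0 < dualEnergy w q N μ := by
  obtain ⟨i, hi⟩ : ∃ i, 0 < μ i := by
    by_contra! h
    simpa [fun i => le_antisymm (h i) (hμ.1 i)] using hμ.2
  obtain ⟨e, he⟩ := Function.ne_iff.1 (hNz i)
  have hAe : 0 < expectedUsage N μ e :=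
    (mul_pos ((hN i e).lt_of_ne' he) hi).trans_le
      (single_le_sum (fun j _ => mul_nonneg (hN j e) (hμ.1 j)) (mem_univ i))
  exact sum_pos'
    (fun e _ => mul_nonneg (hw e).le (Real.rpow_nonneg (expectedUsage_nonneg hN hμ.1 e) q))
    ⟨e, mem_univ e, mul_pos (hw e) (Real.rpow_pos_of_pos hAe q)⟩

lemma dualEnergy_le_of_isMinOn (hN : ∀ i e, 0 ≤ N i e) (hq : 1 ≤ q) {μ₀ ν : ι → ℝ}
    (hμ₀ : μ₀ ∈ stdSimplex ℝ ι) (hmin : IsMinOn (dualEnergy w q N) (stdSimplex ℝ ι) μ₀)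
    (hν : ν ∈ stdSimplex ℝ ι) :
    dualEnergy w q N μ₀ ≤ ∑ e, w e * expectedUsage N μ₀ e ^ (q - 1) * expectedUsage N ν e := by
  have hseg : IsMinOn (fun t : ℝ => dualEnergy w q N (μ₀ + t • (ν - μ₀))) (Icc 0 1) 0 :=
    isMinOn_iff.2 fun t ht => by
      simpa using hmin ((convex_stdSimplex ℝ ι).add_smul_sub_mem hμ₀ hν ht)
  have hslope : 0 ≤ ∑ e, w e * (expectedUsage N μ₀ e ^ (q - 1) *
      (expectedUsage N ν e - expectedUsage N μ₀ e)) :=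
    nonneg_of_mul_nonneg_right
      (hseg.hasDerivAt_nonneg_of_Icc one_pos (hasDerivAt_dualEnergy_add_smul_sub w hq μ₀ ν))
      (by linarith)
  have hself (e : E) : expectedUsage N μ₀ e ^ (q - 1) * expectedUsage N μ₀ e =
      expectedUsage N μ₀ e ^ q :=
    Real.rpow_sub_one_mul_self (expectedUsage_nonneg hN hμ₀.1 e) (by linarith)
  rw [← sub_nonneg]
  convert hslope using 1
  simp only [dualEnergy, ← hself, ← sum_sub_distrib]
  exact sum_congr rfl fun e _ => by ring

lemma dualEnergy_le_sum_row_of_isMinOn (hN : ∀ i e, 0 ≤ N i e) (hq : 1 ≤ q) {μ₀ : ι → ℝ}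
    (hμ₀ : μ₀ ∈ stdSimplex ℝ ι) (hmin : IsMinOn (dualEnergy w q N) (stdSimplex ℝ ι) μ₀) (γ : ι) :
    dualEnergy w q N μ₀ ≤ ∑ e, w e * expectedUsage N μ₀ e ^ (q - 1) * N γ e := by
  classical
  simpa only [expectedUsage_single] using
    dualEnergy_le_of_isMinOn hN hq hμ₀ hmin (single_mem_stdSimplex ℝ γ)

end

section

variable [Fintype E] {p q : ℝ} {σ : E → ℝ} {N : ι → E → ℝ}

lemma one_le_sum_mul_expectedUsage {ρ : E → ℝ} (hadm : ∀ i, 1 ≤ ∑ e, N i e * ρ e) {μ : ι → ℝ}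
    (hμ : μ ∈ stdSimplex ℝ ι) : 1 ≤ ∑ e, ρ e * expectedUsage N μ e :=
  calc (1 : ℝ) = ∑ i, μ i * 1 := by simp [hμ.2]
    _ ≤ ∑ i, μ i * ∑ e, N i e * ρ e :=
      sum_le_sum fun i _ => mul_le_mul_of_nonneg_left (hadm i) (hμ.1 i)
    _ = ∑ e, ρ e * expectedUsage N μ e := by
      simp only [expectedUsage, mul_sum]
      rw [sum_comm]
      exact sum_congr rfl fun _ _ => sum_congr rfl fun _ _ => by ring

lemma dualEnergy_rpow_one_sub_le (hpq : p.HolderConjugate q) (hσ : ∀ e, 0 < σ e)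
    (hN : ∀ i e, 0 ≤ N i e) {ρ : E → ℝ} (hρ : ∀ e, 0 ≤ ρ e) (hadm : ∀ i, 1 ≤ ∑ e, N i e * ρ e)
    {μ : ι → ℝ} (hμ : μ ∈ stdSimplex ℝ ι)
    (hM : 0 < dualEnergy (fun e => σ e ^ (-(q / p))) q N μ) :
    dualEnergy (fun e => σ e ^ (-(q / p))) q N μ ^ (1 - p) ≤ ∑ e, σ e * ρ e ^ p := by
  set M := dualEnergy (fun e => σ e ^ (-(q / p))) q N μ
  have hEn : 0 ≤ ∑ e, σ e * ρ e ^ p :=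
    sum_nonneg fun e _ => mul_nonneg (hσ e).le (Real.rpow_nonneg (hρ e) p)
  have hHolder : 1 ≤ (∑ e, σ e * ρ e ^ p) ^ (1 / p) * M ^ (1 / q) :=
    (one_le_sum_mul_expectedUsage hadm hμ).trans
      (sum_mul_le_weighted_Lp_mul_Lq hpq hσ hρ (expectedUsage_nonneg hN hμ.1))
  calc M ^ (1 - p) = ((M ^ (1 / q))⁻¹) ^ p := by
        rw [Real.inv_rpow (by positivity), ← Real.rpow_mul hM.le, ← Real.rpow_neg hM.le,
          one_div_mul_eq_div, hpq.div_conj_eq_sub_one, neg_sub]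
    _ ≤ ((∑ e, σ e * ρ e ^ p) ^ (1 / p)) ^ p :=
      Real.rpow_le_rpow (by positivity) ((inv_le_iff_one_le_mul₀ (by positivity)).2 hHolder)
        hpq.nonneg
    _ = ∑ e, σ e * ρ e ^ p := by
      rw [← Real.rpow_mul hEn, one_div_mul_cancel hpq.ne_zero, Real.rpow_one]

lemma isLeast_energy (hpq : p.HolderConjugate q) (hσ : ∀ e, 0 < σ e) (hN : ∀ i e, 0 ≤ N i e)
    {μ₀ : ι → ℝ} (hμ₀ : μ₀ ∈ stdSimplex ℝ ι)
    (hmin : IsMinOn (dualEnergy (fun e => σ e ^ (-(q / p))) q N) (stdSimplex ℝ ι) μ₀)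
    (hM : 0 < dualEnergy (fun e => σ e ^ (-(q / p))) q N μ₀) :
    IsLeast {x | ∃ ρ : E → ℝ, (∀ e, 0 ≤ ρ e) ∧ (∀ i, 1 ≤ ∑ e, N i e * ρ e) ∧
      x = ∑ e, σ e * ρ e ^ p} (dualEnergy (fun e => σ e ^ (-(q / p))) q N μ₀ ^ (1 - p)) := by
  set w : E → ℝ := fun e => σ e ^ (-(q / p))
  set M := dualEnergy w q N μ₀
  have hA (e : E) : 0 ≤ expectedUsage N μ₀ e := expectedUsage_nonneg hN hμ₀.1 e
  set ρ : E → ℝ := fun e => w e * expectedUsage N μ₀ e ^ (q - 1) / M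
  refine ⟨⟨ρ, fun e => ?_, fun i => ?_, ?_⟩, ?_⟩
  · exact div_nonneg (mul_nonneg (Real.rpow_nonneg (hσ e).le _) (Real.rpow_nonneg (hA e) _)) hM.le
  · have hrow : ∑ e, N i e * ρ e = (∑ e, w e * expectedUsage N μ₀ e ^ (q - 1) * N i e) / M := by
      rw [sum_div]
      exact sum_congr rfl fun e _ => by ring
    rw [hrow, le_div_iff₀ hM, one_mul]
    exact dualEnergy_le_sum_row_of_isMinOn hN hpq.symm.lt.le hμ₀ hmin i
  · symm
    calc ∑ e, σ e * ρ e ^ p = (∑ e, w e * expectedUsage N μ₀ e ^ q) / M ^ p := by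
          rw [sum_div]
          refine sum_congr rfl fun e _ => ?_
          rw [Real.div_rpow (mul_nonneg (Real.rpow_nonneg (hσ e).le _)
            (Real.rpow_nonneg (hA e) _)) hM.le, mul_div_assoc',
            mul_rpow_mul_rpow_sub_one hpq (hσ e) (hA e)]
      _ = M ^ (1 - p) := by rw [Real.rpow_sub hM, Real.rpow_one]; rfl
  · rintro _ ⟨ρ, hρ, hadm, rfl⟩
    exact dualEnergy_rpow_one_sub_le hpq hσ hN hρ hadm hμ₀ hM

end

end

/-- Probabilistic dual for general `p`: with `q = p/(p-1)`,
`Mod_{p,σ}(Γ)^{-1/p} = (min_{μ ∈ P(Γ)} ∑_e σ(e)^{-q/p} ((Nᵀμ)(e))^q)^{1/q}`. -/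
theorem stmt18 {E ι : Type*} [Fintype E] [Fintype ι] [Nonempty ι]
    (σ : E → ℝ) (hσ : ∀ e, 0 < σ e)
    (p q : ℝ) (hp : 1 < p) (hq : q = p / (p - 1))
    (N : ι → E → ℝ) (hN : ∀ i e, 0 ≤ N i e) (hNz : ∀ i, N i ≠ 0) :
    (sInf {x : ℝ | ∃ ρ : E → ℝ, (∀ e, 0 ≤ ρ e) ∧
        (∀ i, 1 ≤ ∑ e, N i e * ρ e) ∧ x = ∑ e, σ e * ρ e ^ p}) ^ (-(1 / p))
      = (sInf {x : ℝ | ∃ μ : ι → ℝ, (∀ i, 0 ≤ μ i) ∧ (∑ i, μ i = 1) ∧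
          x = ∑ e, σ e ^ (-(q / p)) * (∑ i, N i e * μ i) ^ q}) ^ (1 / q) := by
  have hpq : p.HolderConjugate q := (Real.holderConjugate_iff_eq_conjExponent hp).2 hq
  obtain ⟨μ₀, hμ₀, hmin⟩ :=
    exists_isMinOn_dualEnergy (fun e => σ e ^ (-(q / p))) hpq.symm.nonneg N
  have hM : 0 < dualEnergy (fun e => σ e ^ (-(q / p))) q N μ₀ :=
    dualEnergy_pos (fun e => Real.rpow_pos_of_pos (hσ e) _) hN hNz hμ₀
  have hdual : IsLeast {x : ℝ | ∃ μ : ι → ℝ, (∀ i, 0 ≤ μ i) ∧ (∑ i, μ i = 1) ∧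
      x = ∑ e, σ e ^ (-(q / p)) * (∑ i, N i e * μ i) ^ q}
      (dualEnergy (fun e => σ e ^ (-(q / p))) q N μ₀) :=
    ⟨⟨μ₀, hμ₀.1, hμ₀.2, rfl⟩, by rintro _ ⟨μ, hμ, hμ1, rfl⟩; exact hmin ⟨hμ, hμ1⟩⟩
  rw [(isLeast_energy hpq hσ hN hμ₀ hmin hM).csInf_eq, hdual.csInf_eq, ← Real.rpow_mul hM.le]
  congr 1
  rw [hq]
  field_simp
  ring
end

section
/- (Spanning tree modulus lower bound) Let Γ_spt be the family of all spanning trees of a finite connected graph G with indicator usage vectors. Then Mod_2(Γ_spt)^{-1} ≤ ∑_{e∈E} R_eff(e)^2, where R_eff(e) is the effective resistance across edge e. -/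
/-- `s` is the edge set of a spanning tree of `G`. -/
def IsSpanningTreeEdges {V : Type*} (G : SimpleGraph V) (s : Finset (Sym2 V)) : Prop :=
  ↑s ⊆ G.edgeSet ∧ (SimpleGraph.fromEdgeSet (↑s : Set (Sym2 V))).IsTree

/-- The 2-modulus of the connecting family of all walks joining `x` and `y` in `G`,
a walk `w` using edge `e` with multiplicity `w.edges.count e`.  By the theorem of
Duffin/Kirchhoff this is the effective conductance between `x` and `y`, so its
reciprocal is the effective resistance. -/
noncomputable def mod2Connecting {V : Type*} [Fintype V] [DecidableEq V]
    (G : SimpleGraph V) [DecidableRel G.Adj] (x y : V) : ℝ :=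
  sInf {t : ℝ | ∃ ρ : Sym2 V → ℝ, (∀ e, 0 ≤ ρ e) ∧
    (∀ w : G.Walk x y, 1 ≤ ∑ e ∈ G.edgeFinset, (w.edges.count e : ℝ) * ρ e) ∧
    t = ∑ e ∈ G.edgeFinset, ρ e ^ 2}

/-- The 2-modulus of the family of all spanning trees of `G`, with indicator usage
vectors. -/
noncomputable def mod2SpanningTrees {V : Type*} [Fintype V] [DecidableEq V]
    (G : SimpleGraph V) [DecidableRel G.Adj] : ℝ :=
  sInf {t : ℝ | ∃ ρ : Sym2 V → ℝ, (∀ e, 0 ≤ ρ e) ∧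
    (∀ s : Finset (Sym2 V), IsSpanningTreeEdges G s → 1 ≤ ∑ e ∈ s, ρ e) ∧
    t = ∑ e ∈ G.edgeFinset, ρ e ^ 2}

/-!
Averaging the constraint `1 ≤ ∑ e ∈ T, ρ e` over a uniformly random spanning tree `T` gives
`1 ≤ ∑ₑ pₑ ρₑ` with `pₑ = P[e ∈ T]`, hence `1 ≤ (∑ₑ pₑ²) (∑ₑ ρₑ²)` by Cauchy–Schwarz, that is
`Mod₂(Γ_spt)⁻¹ ≤ ∑ₑ pₑ²`. It remains to see `pₑ ≤ R_eff(e)` for `e = s(x, y)`.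

Let `φ w` count the spanning trees through `e` in which `w` lies on the side of `y` in `T - e`.
Exchanging `e` for an edge `s(u, v)` shows that `φ v - φ u` is the number of trees whose path from
`x` to `y` crosses `s(u, v)` from `u` to `v`, minus the number crossing it from `v` to `u`. So the
gradient of `φ` is a sum of unit path flows, one per tree; pairing it with itself and telescoping
along each path gives the energy `∑ₑ (∇φ)² = N · Nₑ`, where `N` counts all spanning trees and `Nₑ`
those through `e`. As `φ x = 0` and `φ y = Nₑ`, the density `|∇φ| / Nₑ` is admissible for the
walks from `x` to `y` and has energy `N / Nₑ = 1 / pₑ`, so `Mod₂(x, y) ≤ 1 / pₑ`.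
-/

open Finset

theorem Finset.card_filter_add_card_filter_and_not {α : Type*} (s : Finset α) (p q : α → Prop)
    [DecidablePred p] [DecidablePred q] :
    #{a ∈ s | p a} + #{a ∈ s | q a ∧ ¬ p a} = #{a ∈ s | q a} + #{a ∈ s | p a ∧ ¬ q a} := by
  have hp := card_filter_add_card_filter_not (s := {a ∈ s | p a}) q
  have hq := card_filter_add_card_filter_not (s := {a ∈ s | q a}) p
  simp only [filter_filter] at hp hq
  rw [← hp, ← hq, filter_congr (p := fun a => p a ∧ q a) (q := fun a => q a ∧ p a)
    fun _ _ => and_comm]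
  ring

theorem Real.inv_sInf_le_of_forall_one_le_mul {S : Set ℝ} {c : ℝ} (hc : 0 ≤ c)
    (h : ∀ t ∈ S, 1 ≤ c * t) : (sInf S)⁻¹ ≤ c := by
  rcases S.eq_empty_or_nonempty with rfl | ⟨t, ht⟩
  · simpa using hc
  have hc' : 0 < c := hc.lt_of_ne (by rintro rfl; have := h t ht; norm_num at this)
  have hinf : c⁻¹ ≤ sInf S :=
    le_csInf ⟨t, ht⟩ fun s hs => (inv_le_iff_one_le_mul₀' hc').mpr (h s hs)
  simpa using inv_anti₀ (inv_pos.mpr hc') hinf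

namespace SimpleGraph

theorem Walk.sum_map_darts_sub {V M : Type*} [AddCommGroup M] {H : SimpleGraph V} (f : V → M)
    {a b : V} (w : H.Walk a b) : (w.darts.map fun d => f d.snd - f d.fst).sum = f b - f a := by
  induction w with
  | nil => simp
  | cons _ q ih =>
    rw [Walk.darts_cons, List.map_cons, List.sum_cons, ih]
    abel

variable {V : Type*}

theorem Reachable.deleteEdges_or {H : SimpleGraph V} {u v w : V} (h : H.Reachable w u) :
    (H.deleteEdges {s(u, v)}).Reachable w u ∨ (H.deleteEdges {s(u, v)}).Reachable w v := by
  obtain ⟨p⟩ := h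
  suffices ∀ {a z : V} (q : H.Walk a z), z = u →
      (H.deleteEdges {s(u, v)}).Reachable a u ∨ (H.deleteEdges {s(u, v)}).Reachable a v from
    this p rfl
  intro a z q
  induction q with
  | nil => rintro rfl; exact .inl .rfl
  | @cons a c z hac q ih =>
    intro hz
    by_cases he : s(a, c) = s(u, v)
    · rcases Sym2.eq_iff.mp he with ⟨rfl, -⟩ | ⟨rfl, -⟩
      exacts [.inl .rfl, .inr .rfl]
    · have hac' : (H.deleteEdges {s(u, v)}).Adj a c := deleteEdges_adj.mpr ⟨hac, he⟩
      exact (ih hz).imp hac'.reachable.trans hac'.reachable.trans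

theorem IsAcyclic.isTree_sup_edge {F : SimpleGraph V} {a b u v : V} (hF : F.IsAcyclic)
    (hcover : ∀ w, F.Reachable w a ∨ F.Reachable w b) (hab : ¬ F.Reachable a b)
    (hua : F.Reachable u a) (hvb : F.Reachable v b) : (F ⊔ edge u v).IsTree := by
  have huv : ¬ F.Reachable u v := fun h => hab (hua.symm.trans (h.trans hvb))
  have hadj : (F ⊔ edge u v).Adj u v :=
    Or.inr ((edge_adj ..).mpr ⟨.inl ⟨rfl, rfl⟩, fun h => huv (h ▸ .rfl)⟩)
  refine ⟨(connected_iff_exists_forall_reachable _).mpr ⟨u, fun w => ?_⟩,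
    hF.sup_edge_of_not_reachable huv⟩
  rcases hcover w with h | h
  · exact (hua.trans h.symm).mono le_sup_left
  · exact hadj.reachable.trans ((hvb.trans h.symm).mono le_sup_left)

abbrev edgeGraph (s : Finset (Sym2 V)) : SimpleGraph V := fromEdgeSet s

theorem notMem_of_not_reachable_edgeGraph {s : Finset (Sym2 V)} {u v : V} (huv : u ≠ v)
    (h : ¬ (edgeGraph s).Reachable u v) : s(u, v) ∉ s :=
  fun hs => h ((fromEdgeSet_adj _).mpr ⟨hs, huv⟩).reachable

variable [DecidableEq V]

theorem edgeGraph_erase (s : Finset (Sym2 V)) (e : Sym2 V) :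
    edgeGraph (s.erase e) = (edgeGraph s).deleteEdges {e} := by
  rw [edgeGraph, coe_erase, fromEdgeSet_sdiff]
  rfl

theorem edgeGraph_insert (s : Finset (Sym2 V)) (u v : V) :
    edgeGraph (insert s(u, v) s) = edgeGraph s ⊔ edge u v := by
  rw [edgeGraph, coe_insert, Set.insert_eq, fromEdgeSet_union, sup_comm]
  rfl

end SimpleGraph

open SimpleGraph

namespace IsSpanningTreeEdges

variable {V : Type*} {G : SimpleGraph V} {t : Finset (Sym2 V)} {u v x y : V}

theorem subset_edgeFinset [Fintype G.edgeSet] (ht : IsSpanningTreeEdges G t) : t ⊆ G.edgeFinset :=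
  fun _ he => mem_edgeFinset.mpr (ht.1 he)

variable [DecidableEq V]

theorem not_reachable_erase (ht : IsSpanningTreeEdges G t) (he : s(u, v) ∈ t) :
    ¬ (edgeGraph (t.erase s(u, v))).Reachable u v := by
  have hadj : (edgeGraph t).Adj u v :=
    (fromEdgeSet_adj _).mpr ⟨he, (G.mem_edgeSet.mp (ht.1 he)).ne⟩
  rw [edgeGraph_erase]
  exact isAcyclic_iff_forall_adj_isBridge.mp ht.2.isAcyclic hadj

theorem reachable_erase_or (ht : IsSpanningTreeEdges G t) (w : V) :
    (edgeGraph (t.erase s(u, v))).Reachable w u ∨ (edgeGraph (t.erase s(u, v))).Reachable w v := by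
  rw [edgeGraph_erase]
  exact (ht.2.connected.preconnected w u).deleteEdges_or

theorem exchange (ht : IsSpanningTreeEdges G t) (he : s(x, y) ∈ t) (huv : G.Adj u v)
    (hux : (edgeGraph (t.erase s(x, y))).Reachable u x)
    (hvy : (edgeGraph (t.erase s(x, y))).Reachable v y) :
    IsSpanningTreeEdges G (insert s(u, v) (t.erase s(x, y))) := by
  refine ⟨?_, ?_⟩
  · rw [coe_insert, Set.insert_subset_iff]
    exact ⟨huv, (coe_subset.mpr (erase_subset _ _)).trans ht.1⟩
  · have hF : (edgeGraph (t.erase s(x, y))).IsAcyclic := by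
      rw [edgeGraph_erase]
      exact ht.2.isAcyclic.anti (deleteEdges_le _)
    show (edgeGraph _).IsTree
    rw [edgeGraph_insert]
    exact hF.isTree_sup_edge ht.reachable_erase_or (ht.not_reachable_erase he) hux hvy

end IsSpanningTreeEdges

namespace SimpleGraph

section TreeCounting

variable {V : Type*} [Fintype V] (G : SimpleGraph V) [DecidableRel G.Adj]

open Classical in
noncomputable def spanningTrees : Finset (Finset (Sym2 V)) :=
  {s ∈ G.edgeFinset.powerset | IsSpanningTreeEdges G s}

theorem mem_spanningTrees {s : Finset (Sym2 V)} :
    s ∈ spanningTrees G ↔ IsSpanningTreeEdges G s := by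
  classical
  simpa [spanningTrees] using IsSpanningTreeEdges.subset_edgeFinset

variable {G} in
theorem Connected.spanningTrees_nonempty (hG : G.Connected) : (spanningTrees G).Nonempty := by
  classical
  obtain ⟨T, hTG, hT⟩ := hG.exists_isTree_le
  refine ⟨T.edgeFinset, (mem_spanningTrees G).mpr ⟨?_, ?_⟩⟩
  · simpa using edgeSet_mono hTG
  · simpa using hT

variable [DecidableEq V]

noncomputable def treeCount (e : Sym2 V) : ℕ := #{s ∈ spanningTrees G | e ∈ s}

/-- For a tree `t`, this says that the path from `a` to `b` in `t` runs through the edge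
`s(u, v)` from `u` to `v`. -/
def DartOnTreePath (t : Finset (Sym2 V)) (a b u v : V) : Prop :=
  s(u, v) ∈ t ∧ ¬ (edgeGraph (t.erase s(u, v))).Reachable a b ∧
    (edgeGraph (t.erase s(u, v))).Reachable v b

open Classical in
/-- Divided by `#(spanningTrees G)`, this is the potential of the unit current from `x` to `y`,
grounded at `x`. -/
noncomputable def treePotential (x y w : V) : ℝ :=
  #{s ∈ spanningTrees G | s(x, y) ∈ s ∧ (edgeGraph (s.erase s(x, y))).Reachable w y}

variable {G}

open Classical in
theorem card_exchange_eq_card_dartOnTreePath {x y u v : V} (hxy : G.Adj x y) (huv : G.Adj u v) :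
    #{s ∈ spanningTrees G | s(x, y) ∈ s ∧ (edgeGraph (s.erase s(x, y))).Reachable v y ∧
      ¬ (edgeGraph (s.erase s(x, y))).Reachable u y} =
    #{t ∈ spanningTrees G | DartOnTreePath t x y u v} := by
  refine card_bij' (fun s _ => insert s(u, v) (s.erase s(x, y)))
    (fun t _ => insert s(x, y) (t.erase s(u, v))) ?_ ?_ ?_ ?_ <;>
    simp only [mem_filter, mem_spanningTrees]
  · rintro s ⟨hs, hxys, hvy, huy⟩
    have hux := (hs.reachable_erase_or u).resolve_right huy
    have huvs := notMem_of_not_reachable_edgeGraph huv.ne fun h => huy (h.trans hvy)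
    rw [DartOnTreePath, erase_insert huvs]
    exact ⟨hs.exchange hxys huv hux hvy, mem_insert_self _ _, hs.not_reachable_erase hxys, hvy⟩
  · rintro t ⟨ht, huvt, hxy', hvy⟩
    have hxu := (ht.reachable_erase_or x).resolve_right fun h => hxy' (h.trans hvy)
    have hxyt := notMem_of_not_reachable_edgeGraph hxy.ne hxy'
    rw [erase_insert hxyt]
    exact ⟨ht.exchange huvt hxy hxu hvy.symm, mem_insert_self _ _, hvy,
      fun h => ht.not_reachable_erase huvt (h.trans hvy.symm)⟩
  · rintro s ⟨hs, hxys, hvy, huy⟩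
    have huvs := notMem_of_not_reachable_edgeGraph huv.ne fun h => huy (h.trans hvy)
    rw [erase_insert huvs, insert_erase hxys]
  · rintro t ⟨ht, huvt, hxy', hvy⟩
    have hxyt := notMem_of_not_reachable_edgeGraph hxy.ne hxy'
    rw [erase_insert hxyt, insert_erase huvt]

open Classical in
theorem treePotential_sub {x y u v : V} (hxy : G.Adj x y) (huv : G.Adj u v) :
    treePotential G x y v - treePotential G x y u =
      (#{t ∈ spanningTrees G | DartOnTreePath t x y u v} : ℝ) -
        #{t ∈ spanningTrees G | DartOnTreePath t x y v u} := by
  have key {u v : V} (huv : G.Adj u v) :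
      #{s ∈ spanningTrees G | (s(x, y) ∈ s ∧ (edgeGraph (s.erase s(x, y))).Reachable v y) ∧
        ¬ (s(x, y) ∈ s ∧ (edgeGraph (s.erase s(x, y))).Reachable u y)} =
      #{t ∈ spanningTrees G | DartOnTreePath t x y u v} := by
    rw [← card_exchange_eq_card_dartOnTreePath hxy huv]
    congr 1
    exact filter_congr fun _ _ => by tauto
  have h := card_filter_add_card_filter_and_not (spanningTrees G)
    (fun s => s(x, y) ∈ s ∧ (edgeGraph (s.erase s(x, y))).Reachable u y)
    (fun s => s(x, y) ∈ s ∧ (edgeGraph (s.erase s(x, y))).Reachable v y)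
  rw [key huv, key huv.symm] at h
  have h' := congrArg (Nat.cast : ℕ → ℝ) h
  push_cast at h'
  simp only [treePotential]
  linarith

end TreeCounting

section PathFlow

variable {V : Type*} [DecidableEq V] {t : Finset (Sym2 V)} {a b u v w x y : V}

open Classical in
noncomputable def pathFlow (t : Finset (Sym2 V)) (a b u v : V) : ℝ :=
  (if DartOnTreePath t a b u v then 1 else 0) - if DartOnTreePath t a b v u then 1 else 0

noncomputable def pathFlowGrad (t : Finset (Sym2 V)) (a b : V) (f : V → ℝ) : Sym2 V → ℝ :=
  Sym2.lift ⟨fun u v => pathFlow t a b u v * (f v - f u), fun u v => by simp only [pathFlow]; ring⟩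

theorem not_dartOnTreePath_self : ¬ DartOnTreePath t a a u v := fun h => h.2.1 .rfl

theorem dartOnTreePath_iff_of_mem (haw : s(a, w) ∈ t) (hne : s(u, v) ≠ s(a, w)) :
    DartOnTreePath t a b u v ↔ DartOnTreePath t w b u v := by
  rcases eq_or_ne a w with rfl | haw'
  · rfl
  have hreach : (edgeGraph (t.erase s(u, v))).Reachable a w :=
    ((fromEdgeSet_adj _).mpr ⟨mem_erase.mpr ⟨hne.symm, haw⟩, haw'⟩).reachable
  exact and_congr_right fun _ => and_congr_left fun _ =>
    not_congr ⟨hreach.symm.trans, hreach.trans⟩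

theorem pathFlow_eq_of_mem (haw : s(a, w) ∈ t) (hne : s(u, v) ≠ s(a, w)) :
    pathFlow t a b u v = pathFlow t w b u v := by
  have hne' : s(v, u) ≠ s(a, w) := Sym2.eq_swap (a := u) ▸ hne
  rw [pathFlow, pathFlow, dartOnTreePath_iff_of_mem haw hne, dartOnTreePath_iff_of_mem haw hne']

theorem pathFlowGrad_sub_of_mem (f : V → ℝ) (e : Sym2 V) (haw : s(a, w) ∈ t)
    (hab : ¬ (edgeGraph (t.erase s(a, w))).Reachable a b)
    (hwb : (edgeGraph (t.erase s(a, w))).Reachable w b) :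
    pathFlowGrad t a b f e - pathFlowGrad t w b f e = if e = s(a, w) then f w - f a else 0 := by
  induction e using Sym2.ind with | _ u v =>
  split_ifs with he
  · have hwb' : (edgeGraph (t.erase s(w, a))).Reachable w b := by rwa [Sym2.eq_swap]
    have h1 : DartOnTreePath t a b a w := ⟨haw, hab, hwb⟩
    have h2 : ¬ DartOnTreePath t a b w a := fun h => h.2.1 h.2.2
    have h3 : ¬ DartOnTreePath t w b a w := fun h => h.2.1 hwb
    have h4 : ¬ DartOnTreePath t w b w a := fun h => h.2.1 hwb'
    rw [he]
    simp [pathFlowGrad, pathFlow, h1, h2, h3, h4]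
  · simp only [pathFlowGrad, Sym2.lift_mk, pathFlow_eq_of_mem haw he, sub_self]

variable [Fintype V] {G : SimpleGraph V} [DecidableRel G.Adj]

theorem _root_.IsSpanningTreeEdges.sum_pathFlowGrad (ht : IsSpanningTreeEdges G t)
    (f : V → ℝ) (a b : V) : ∑ e ∈ G.edgeFinset, pathFlowGrad t a b f e = f b - f a := by
  suffices ∀ {a} (p : (edgeGraph t).Walk a b), p.IsPath →
      ∑ e ∈ G.edgeFinset, pathFlowGrad t a b f e = f b - f a by
    obtain ⟨p⟩ := ht.2.connected.preconnected a b
    exact this p.bypass p.bypass_isPath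
  intro a p hp
  induction p with
  | nil =>
    refine (sum_eq_zero fun e _ => ?_).trans (sub_self _).symm
    induction e using Sym2.ind
    simp [pathFlowGrad, pathFlow, not_dartOnTreePath_self]
  | @cons a w b hadj q ih =>
    rw [Walk.cons_isPath_iff] at hp
    have haw : s(a, w) ∈ t := ((fromEdgeSet_adj _).mp hadj).1
    have hwb : (edgeGraph (t.erase s(a, w))).Reachable w b := by
      rw [edgeGraph_erase]
      exact reachable_deleteEdges_iff_exists_walk.mpr
        ⟨q, fun h => hp.2 (q.fst_mem_support_of_mem_edges h)⟩
    have hab : ¬ (edgeGraph (t.erase s(a, w))).Reachable a b := fun h =>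
      ht.not_reachable_erase haw (h.trans hwb.symm)
    have hsub := sum_congr rfl fun e (_ : e ∈ G.edgeFinset) =>
      pathFlowGrad_sub_of_mem f e haw hab hwb
    rw [sum_sub_distrib, sum_ite_eq', if_pos (ht.subset_edgeFinset haw), ih hp.1] at hsub
    linarith

end PathFlow

section Energy

variable {V : Type*} [Fintype V] [DecidableEq V] {G : SimpleGraph V} [DecidableRel G.Adj]
  {x y u v : V}

noncomputable def absGrad (f : V → ℝ) : Sym2 V → ℝ :=
  Sym2.lift ⟨fun u v => |f v - f u|, fun _ _ => abs_sub_comm _ _⟩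

theorem treePotential_right : treePotential G x y y = treeCount G s(x, y) := by
  classical
  simp only [treePotential, treeCount, Reachable.rfl, and_true]

theorem treePotential_left : treePotential G x y x = 0 := by
  simp only [treePotential, Nat.cast_eq_zero, card_eq_zero, filter_eq_empty_iff]
  exact fun s hs h => ((mem_spanningTrees G).mp hs).not_reachable_erase h.1 h.2

theorem sum_pathFlow (hxy : G.Adj x y) (huv : G.Adj u v) :
    ∑ t ∈ spanningTrees G, pathFlow t x y u v = treePotential G x y v - treePotential G x y u := by
  rw [treePotential_sub hxy huv]
  simp only [pathFlow, sum_sub_distrib, sum_boole]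

theorem sum_absGrad_treePotential_sq (hxy : G.Adj x y) :
    ∑ e ∈ G.edgeFinset, absGrad (treePotential G x y) e ^ 2 =
      #(spanningTrees G) * treeCount G s(x, y) := by
  have hsq : ∀ e ∈ G.edgeFinset, absGrad (treePotential G x y) e ^ 2 =
      ∑ t ∈ spanningTrees G, pathFlowGrad t x y (treePotential G x y) e := by
    intro e he
    induction e using Sym2.ind with | _ u v =>
    simp only [absGrad, pathFlowGrad, Sym2.lift_mk, sq_abs, ← sum_mul,
      sum_pathFlow hxy (G.mem_edgeFinset.mp he)]
    ring
  rw [sum_congr rfl hsq, sum_comm, sum_congr rfl fun t ht =>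
    ((mem_spanningTrees G).mp ht).sum_pathFlowGrad (treePotential G x y) x y,
    sum_const, treePotential_right, treePotential_left, sub_zero, nsmul_eq_mul]

theorem Walk.sum_count_edges_mul (ρ : Sym2 V → ℝ) (w : G.Walk x y) :
    ∑ e ∈ G.edgeFinset, (w.edges.count e : ℝ) * ρ e = (w.edges.map ρ).sum := by
  rw [sum_list_map_count]
  simp only [nsmul_eq_mul]
  refine (sum_subset (fun e he => mem_edgeFinset.mpr
    (w.edges_subset_edgeSet (List.mem_toFinset.mp he))) fun e _ he => ?_).symm
  rw [List.count_eq_zero_of_not_mem (mt List.mem_toFinset.mpr he), Nat.cast_zero, zero_mul]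

theorem mod2Connecting_le {ρ : Sym2 V → ℝ} (hρ0 : ∀ e, 0 ≤ ρ e)
    (hρ : ∀ w : G.Walk x y, 1 ≤ (w.edges.map ρ).sum) :
    mod2Connecting G x y ≤ ∑ e ∈ G.edgeFinset, ρ e ^ 2 :=
  csInf_le ⟨0, by rintro _ ⟨ρ, -, -, rfl⟩; exact sum_nonneg fun _ _ => sq_nonneg _⟩
    ⟨ρ, hρ0, fun w => (w.sum_count_edges_mul ρ).symm ▸ hρ w, rfl⟩

theorem one_le_mod2Connecting (hxy : G.Adj x y) : 1 ≤ mod2Connecting G x y := by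
  refine le_csInf ⟨_, fun _ => 1, fun _ => zero_le_one, fun w => ?_, rfl⟩ ?_
  · rw [Walk.sum_count_edges_mul, List.map_const', List.sum_replicate, nsmul_one,
      Walk.length_edges, Nat.one_le_cast, Nat.one_le_iff_ne_zero]
    exact fun h => hxy.ne (Walk.eq_of_length_eq_zero h)
  · rintro _ ⟨ρ, -, hρ, rfl⟩
    have h1 := hρ hxy.toWalk
    rw [Walk.sum_count_edges_mul] at h1
    simp only [Adj.toWalk, Walk.edges_cons, Walk.edges_nil, List.map_cons, List.map_nil,
      List.sum_cons, List.sum_nil, add_zero] at h1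
    calc 1 ≤ ρ s(x, y) ^ 2 := one_le_pow₀ h1
      _ ≤ ∑ e ∈ G.edgeFinset, ρ e ^ 2 :=
        single_le_sum (fun _ _ => sq_nonneg _) (mem_edgeFinset.mpr hxy)

theorem mod2Connecting_le_of_potential (f : V → ℝ) (hf : 0 < f y - f x) :
    mod2Connecting G x y ≤ (∑ e ∈ G.edgeFinset, absGrad f e ^ 2) / (f y - f x) ^ 2 := by
  set c := f y - f x
  have hgrad (d : G.Dart) : absGrad f d.edge = |f d.snd - f d.fst| := rfl
  calc mod2Connecting G x y ≤ ∑ e ∈ G.edgeFinset, (c⁻¹ * absGrad f e) ^ 2 := by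
        refine mod2Connecting_le (fun e => ?_) fun w => ?_
        · induction e using Sym2.ind
          exact mul_nonneg (inv_nonneg.mpr hf.le) (abs_nonneg _)
        · rw [List.sum_map_mul_left, Walk.edges, List.map_map, ← inv_mul_cancel₀ hf.ne']
          refine mul_le_mul_of_nonneg_left ?_ (inv_nonneg.mpr hf.le)
          calc c = (w.darts.map fun d => f d.snd - f d.fst).sum := (w.sum_map_darts_sub f).symm
            _ ≤ _ := List.sum_le_sum fun d _ => (le_abs_self _).trans (hgrad d).ge
    _ = _ := by simp only [mul_pow, ← mul_sum, inv_pow, div_eq_inv_mul]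

theorem treeCount_div_card_le_inv_mod2Connecting (hxy : G.Adj x y) :
    (treeCount G s(x, y) : ℝ) / #(spanningTrees G) ≤ (mod2Connecting G x y)⁻¹ := by
  have hmod := zero_lt_one.trans_le (one_le_mod2Connecting hxy)
  rcases (treeCount G s(x, y)).eq_zero_or_pos with h | h
  · rw [h, Nat.cast_zero, zero_div]
    exact inv_nonneg.mpr hmod.le
  have hc : (0 : ℝ) < treeCount G s(x, y) := Nat.cast_pos.mpr h
  have hφ : treePotential G x y y - treePotential G x y x = treeCount G s(x, y) := by
    rw [treePotential_right, treePotential_left, sub_zero]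
  have hle : mod2Connecting G x y ≤ _ := mod2Connecting_le_of_potential _ (hφ ▸ hc)
  rw [hφ, sum_absGrad_treePotential_sq hxy, sq, mul_div_mul_right _ _ hc.ne'] at hle
  rw [← inv_div]
  exact inv_anti₀ hmod hle

theorem inv_mod2SpanningTrees_le_sum_sq (μ : Finset (Sym2 V) → ℝ)
    (hμ0 : ∀ s ∈ spanningTrees G, 0 ≤ μ s) (hμ1 : ∑ s ∈ spanningTrees G, μ s = 1) :
    (mod2SpanningTrees G)⁻¹ ≤ ∑ e ∈ G.edgeFinset, (∑ s ∈ spanningTrees G with e ∈ s, μ s) ^ 2 := by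
  refine Real.inv_sInf_le_of_forall_one_le_mul (sum_nonneg fun _ _ => sq_nonneg _) ?_
  rintro _ ⟨ρ, -, hρ, rfl⟩
  have hpρ : 1 ≤ ∑ e ∈ G.edgeFinset, (∑ s ∈ spanningTrees G with e ∈ s, μ s) * ρ e :=
    calc 1 = ∑ s ∈ spanningTrees G, μ s * 1 := by simp [hμ1]
      _ ≤ ∑ s ∈ spanningTrees G, μ s * ∑ e ∈ s, ρ e := by
        gcongr with s hs
        · exact hμ0 s hs
        · exact hρ s ((mem_spanningTrees G).mp hs)
      _ = _ := by
        simp_rw [mul_sum, sum_mul]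
        refine sum_comm' fun s e => ?_
        simp only [mem_filter, mem_spanningTrees]
        exact ⟨fun h => ⟨⟨h.1, h.2⟩, h.1.subset_edgeFinset h.2⟩, fun h => h.1⟩
  calc 1 ≤ (∑ e ∈ G.edgeFinset, (∑ s ∈ spanningTrees G with e ∈ s, μ s) * ρ e) ^ 2 :=
        one_le_pow₀ hpρ
    _ ≤ _ := sum_mul_sq_le_sq_mul_sq _ _ _

end Energy

end SimpleGraph

/-- Spanning tree modulus lower bound:
`Mod₂(Γ_spt)⁻¹ ≤ ∑_{e ∈ E} R_eff(e)²`, where `R_eff(e)` is the effective resistance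
across edge `e`. -/
theorem stmt19 {V : Type*} [Fintype V] [DecidableEq V]
    (G : SimpleGraph V) [DecidableRel G.Adj] (hconn : G.Connected)
    (Reff : Sym2 V → ℝ)
    (hReff : ∀ x y : V, G.Adj x y → Reff s(x, y) = (mod2Connecting G x y)⁻¹) :
    (mod2SpanningTrees G)⁻¹ ≤ ∑ e ∈ G.edgeFinset, Reff e ^ 2 := by
  have hN : (0 : ℝ) < #(spanningTrees G) :=
    Nat.cast_pos.mpr (card_pos.mpr hconn.spanningTrees_nonempty)
  calc (mod2SpanningTrees G)⁻¹
      ≤ ∑ e ∈ G.edgeFinset, (∑ s ∈ spanningTrees G with e ∈ s, (#(spanningTrees G) : ℝ)⁻¹) ^ 2 :=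
        inv_mod2SpanningTrees_le_sum_sq _ (fun _ _ => inv_nonneg.mpr hN.le)
          (by rw [sum_const, nsmul_eq_mul, mul_inv_cancel₀ hN.ne'])
    _ ≤ ∑ e ∈ G.edgeFinset, Reff e ^ 2 := by
      refine sum_le_sum fun e he =>
        pow_le_pow_left₀ (sum_nonneg fun _ _ => inv_nonneg.mpr hN.le) ?_ 2
      induction e using Sym2.ind with | _ x y =>
      have hxy : G.Adj x y := mem_edgeFinset.mp he
      rw [hReff x y hxy, sum_const, nsmul_eq_mul, ← div_eq_mul_inv]
      exact treeCount_div_card_le_inv_mod2Connecting hxy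
end
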